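/- arXiv:2308.13640 — 6 statements merged into one kernel-verified Lean document; each statement's English description precedes it below -/
import Mathlib

section
/- With the level-decomposition setup below, for every i with 1 ≤ i ≤ 2k, the chromatic number of the spanning subdigraph D_i^2 of D_i with arc set A_2 is at most 6. -/
variable {V : Type*}

/-- The underlying simple graph of the digraph with arc relation `A`
(a directed 2-cycle yields a single edge). -/
def underlying (A : V → V → Prop) : SimpleGraph V where
  Adj x y := x ≠ y ∧ (A x y ∨ A y x)
  symm := ⟨fun x y h => ⟨h.1.symm, h.2.symm⟩⟩
  loopless := ⟨fun x h => h.1 rfl⟩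

/-- `p` is the vertex list of a directed path in `A` from `a` to `b`
having at least `k` arcs. -/
def IsDipathFromTo (A : V → V → Prop) (p : List V) (a b : V) (k : ℕ) : Prop :=
  p.Chain' A ∧ p.Nodup ∧ p.head? = some a ∧ p.getLast? = some b ∧ k + 1 ≤ p.length

/-- The digraph `A` contains a subdivision of the four-blocks cycle `C(k1,k2,k3,k4)`:
four distinct vertices `a,b,c,d` and four directed paths `P1 : a → b` of length ≥ `k1`,
`P2 : c → b` of length ≥ `k2`, `P3 : c → d` of length ≥ `k3`, `P4 : a → d` of length ≥ `k4`,
pairwise meeting only at the shared endpoints. -/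
def HasC4Subdivision (A : V → V → Prop) (k1 k2 k3 k4 : ℕ) : Prop :=
  ∃ (a b c d : V) (p1 p2 p3 p4 : List V),
    a ≠ b ∧ a ≠ c ∧ a ≠ d ∧ b ≠ c ∧ b ≠ d ∧ c ≠ d ∧
    IsDipathFromTo A p1 a b k1 ∧
    IsDipathFromTo A p2 c b k2 ∧
    IsDipathFromTo A p3 c d k3 ∧
    IsDipathFromTo A p4 a d k4 ∧
    (∀ v ∈ p1, v ∈ p2 → v = b) ∧
    (∀ v ∈ p1, v ∉ p3) ∧
    (∀ v ∈ p1, v ∈ p4 → v = a) ∧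
    (∀ v ∈ p2, v ∈ p3 → v = c) ∧
    (∀ v ∈ p2, v ∉ p4) ∧
    (∀ v ∈ p3, v ∈ p4 → v = d)

/-- A spanning out-tree of the digraph `A`, encoded by its root, the parent map
(with `parent root = root`), and the level function (the level of a vertex is
the number of vertices of the unique directed tree path from the root to it). -/
structure SpanningOutTree (A : V → V → Prop) where
  root : V
  parent : V → V
  level : V → ℕ
  parent_root : parent root = root
  parent_arc : ∀ v, v ≠ root → A (parent v) v
  level_root : level root = 1
  level_parent : ∀ v, v ≠ root → level v = level (parent v) + 1

/-- `T.Anc y x` : `y` is an ancestor of `x` in the out-tree `T`,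
i.e. `y` lies on the tree path from the root to `x`. -/
def SpanningOutTree.Anc {A : V → V → Prop} (T : SpanningOutTree A) (y x : V) : Prop :=
  ∃ n : ℕ, T.parent^[n] x = y

/-- `T` is final if for every backward arc `(x,y)` of the digraph
(i.e. with `l_T(y) ≤ l_T(x)`), `y` is an ancestor of `x`. -/
def SpanningOutTree.IsFinal {A : V → V → Prop} (T : SpanningOutTree A) : Prop :=
  ∀ x y, A x y → T.level y ≤ T.level x → T.Anc y x

/-!
Colour `D_i^2` greedily: the Grundy number of `x` is the least colour not used by its
out-neighbours, well defined because arcs of `D_i^2` strictly decrease the level. Suppose some `x`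
gets colour `≥ 6`. All out-neighbours of `x` are ancestors of `x`, hence lie on one tree path and
have pairwise distinct levels. Let `t`, `m` be the lowest and highest ones; among the
out-neighbours of colours `2, …, 5`, two, `u` and `u'`, are neither, so they lie strictly between
`t` and `m`. Each of `u, u'` has out-neighbours of colours `0` and `1`; an arc from `u` landing
above `t` would close a subdivision of `C(k,1,k,1)`, so one of them lands below `t`. But arcs from
both `u` and `u'` landing below `t` close a subdivision of `C(k,1,k,1)` as well. Levels in `V_i`
are `≥ 2k` apart, which gives the tree segments their required lengths.

All vertices involved are ancestors of `x`, so the subdivisions are built among levels, where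
tree paths are intervals of integers, and transported to `D` along `T.ancAt x`.
-/

section Grundy

variable {S : V → V → Prop} (hS : WellFounded (flip S))

noncomputable def grundy : V → ℕ :=
  hS.fix fun x g => sInf {c | ∀ y (h : S x y), g y h ≠ c}

theorem grundy_eq (x : V) : grundy hS x = sInf {c | ∀ y, S x y → grundy hS y ≠ c} :=
  hS.fix_eq _ x

variable {hS}

theorem grundy_ne_of_rel [Finite V] {x y : V} (h : S x y) : grundy hS y ≠ grundy hS x := by
  have hfin : (grundy hS '' {y | S x y}).Finite := (Set.toFinite _).image _
  obtain ⟨c, hc⟩ := hfin.exists_notMem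
  have hmem := Nat.sInf_mem (s := {c | ∀ y, S x y → grundy hS y ≠ c})
    ⟨c, fun y hy hyc => hc ⟨y, hy, hyc⟩⟩
  rw [← grundy_eq] at hmem
  exact hmem y h

theorem exists_rel_grundy_eq_of_lt {x : V} {c : ℕ} (hc : c < grundy hS x) :
    ∃ y, S x y ∧ grundy hS y = c := by
  rw [grundy_eq] at hc
  simpa using Nat.notMem_of_lt_sInf hc

theorem colorable_underlying_of_grundy_lt [Finite V] {n : ℕ} (h : ∀ x, grundy hS x < n) :
    (underlying S).Colorable n :=
  ⟨SimpleGraph.Coloring.mk (fun x => ⟨grundy hS x, h x⟩) fun {x y} hxy heq => by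
    have : grundy hS x = grundy hS y := congrArg Fin.val heq
    rcases hxy.2 with hxy | hyx
    · exact grundy_ne_of_rel hxy this.symm
    · exact grundy_ne_of_rel hyx this⟩

end Grundy

section Subdivision

variable {W : Type*}

theorem List.IsChain.exists_rel_of_mem {R : W → W → Prop} :
    ∀ {l : List W}, l.IsChain R → 2 ≤ l.length → ∀ v ∈ l, ∃ w, R v w ∨ R w v
  | a :: b :: l, h, _, v, hv => by
    rcases List.mem_cons.mp hv with rfl | hv
    · exact ⟨b, .inl (List.isChain_cons_cons.mp h).1⟩
    rcases l with _ | ⟨c, l⟩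
    · exact ⟨a, .inr (by simpa [List.mem_singleton.mp hv] using h)⟩
    · exact exists_rel_of_mem (List.isChain_cons_cons.mp h).2 (by simp) v hv

theorem IsDipathFromTo.mem_of_ne {B : W → W → Prop} {s : Set W} {p : List W} {a b : W} {k : ℕ}
    (hp : IsDipathFromTo B p a b k) (hab : a ≠ b) (hB : ∀ v w, B v w → v ∈ s ∧ w ∈ s) :
    ∀ v ∈ p, v ∈ s := by
  have hlen : 2 ≤ p.length := by
    obtain ⟨_, _, ha, hb, _⟩ := hp
    rcases p with _ | ⟨c, _ | ⟨d, p⟩⟩ <;> simp_all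
  intro v hv
  obtain ⟨w, hvw | hwv⟩ := hp.1.exists_rel_of_mem hlen v hv
  exacts [(hB _ _ hvw).1, (hB _ _ hwv).2]

theorem IsDipathFromTo.map {B : W → W → Prop} {A : V → V → Prop} {f : W → V} {p : List W}
    {a b : W} {k : ℕ} (hp : IsDipathFromTo B p a b k) (hBA : ∀ v w, B v w → A (f v) (f w))
    (hf : Set.InjOn f {v | v ∈ p}) : IsDipathFromTo A (p.map f) (f a) (f b) k := by
  obtain ⟨hc, hn, ha, hb, hl⟩ := hp
  exact ⟨List.isChain_map_of_isChain f hBA hc, hn.map_on fun v hv w hw => hf hv hw,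
    by simp [ha], by simp [hb], by simpa using hl⟩

theorem HasC4Subdivision.map {B : W → W → Prop} {A : V → V → Prop} {f : W → V} {s : Set W}
    (hB : ∀ v w, B v w → v ∈ s ∧ w ∈ s ∧ A (f v) (f w)) (hf : s.InjOn f) {k₁ k₂ k₃ k₄ : ℕ}
    (h : HasC4Subdivision B k₁ k₂ k₃ k₄) : HasC4Subdivision A k₁ k₂ k₃ k₄ := by
  obtain ⟨a, b, c, d, p₁, p₂, p₃, p₄, hab, hac, had, hbc, hbd, hcd, h₁, h₂, h₃, h₄,
    h₁₂, h₁₃, h₁₄, h₂₃, h₂₄, h₃₄⟩ := h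
  have hs : ∀ v w, B v w → v ∈ s ∧ w ∈ s := fun v w h => ⟨(hB v w h).1, (hB v w h).2.1⟩
  have s₁ := h₁.mem_of_ne hab hs
  have s₂ := h₂.mem_of_ne hbc.symm hs
  have s₃ := h₃.mem_of_ne hcd hs
  have s₄ := h₄.mem_of_ne had hs
  have hA : ∀ v w, B v w → A (f v) (f w) := fun v w h => (hB v w h).2.2
  have hpath : ∀ {p : List W} {x y : W} {k : ℕ}, IsDipathFromTo B p x y k → (∀ v ∈ p, v ∈ s) →
      IsDipathFromTo A (p.map f) (f x) (f y) k :=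
    fun hp hps => hp.map hA (hf.mono fun v hv => hps v hv)
  have transfer : ∀ {p q : List W} {P : V → Prop}, (∀ v ∈ p, v ∈ s) → (∀ v ∈ q, v ∈ s) →
      (∀ j ∈ p, j ∈ q → P (f j)) → ∀ v ∈ p.map f, v ∈ q.map f → P v := by
    intro p q P hp hq hpq v hvp hvq
    obtain ⟨j, hj, rfl⟩ := List.mem_map.mp hvp
    obtain ⟨j', hj', hjj'⟩ := List.mem_map.mp hvq
    exact hpq j hj (hf (hq j' hj') (hp j hj) hjj' ▸ hj')
  have ha : a ∈ s := s₁ a (List.mem_of_mem_head? h₁.2.2.1)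
  have hb : b ∈ s := s₁ b (List.mem_of_mem_getLast? h₁.2.2.2.1)
  have hc : c ∈ s := s₂ c (List.mem_of_mem_head? h₂.2.2.1)
  have hd : d ∈ s := s₃ d (List.mem_of_mem_getLast? h₃.2.2.2.1)
  exact ⟨f a, f b, f c, f d, p₁.map f, p₂.map f, p₃.map f, p₄.map f,
    (hf.ne_iff ha hb).2 hab, (hf.ne_iff ha hc).2 hac, (hf.ne_iff ha hd).2 had,
    (hf.ne_iff hb hc).2 hbc, (hf.ne_iff hb hd).2 hbd, (hf.ne_iff hc hd).2 hcd,
    hpath h₁ s₁, hpath h₂ s₂, hpath h₃ s₃, hpath h₄ s₄,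
    transfer s₁ s₂ fun j hj hj' => congrArg f (h₁₂ j hj hj'),
    transfer (P := fun _ => False) s₁ s₃ h₁₃,
    transfer s₁ s₄ fun j hj hj' => congrArg f (h₁₄ j hj hj'),
    transfer s₂ s₃ fun j hj hj' => congrArg f (h₂₃ j hj hj'),
    transfer (P := fun _ => False) s₂ s₄ h₂₄,
    transfer s₃ s₄ fun j hj hj' => congrArg f (h₃₄ j hj hj')⟩

end Subdivision

namespace IsDipathFromTo

variable {W : Type*} {B : W → W → Prop} {p q : List W} {a b c d : W} {k l : ℕ}

theorem singleton (a : W) : IsDipathFromTo B [a] a a 0 :=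
  ⟨.singleton a, List.nodup_singleton a, rfl, rfl, le_rfl⟩

theorem mono (hp : IsDipathFromTo B p a b k) (hlk : l ≤ k) : IsDipathFromTo B p a b l :=
  ⟨hp.1, hp.2.1, hp.2.2.1, hp.2.2.2.1, by have := hp.2.2.2.2; omega⟩

theorem cons {x : W} (hp : IsDipathFromTo B p a b k) (hxa : B x a) (hx : x ∉ p) :
    IsDipathFromTo B (x :: p) x b (k + 1) := by
  obtain ⟨hc, hn, ha, hb, hl⟩ := hp
  have hne : p ≠ [] := by rintro rfl; simp at ha
  refine ⟨List.isChain_cons.mpr ⟨by simpa [ha] using hxa, hc⟩, List.nodup_cons.mpr ⟨hx, hn⟩, rfl,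
    by simp [List.getLast?_cons, hb], by simpa using hl⟩

theorem append (hp : IsDipathFromTo B p a b k) (hq : IsDipathFromTo B q c d l) (hbc : B b c)
    (hpq : p.Disjoint q) : IsDipathFromTo B (p ++ q) a d (k + l + 1) := by
  obtain ⟨hpc, hpn, hpa, hpb, hpl⟩ := hp
  obtain ⟨hqc, hqn, hqc', hqd, hql⟩ := hq
  have hp0 : p ≠ [] := by rintro rfl; simp at hpa
  have hq0 : q ≠ [] := by rintro rfl; simp at hqc'
  refine ⟨List.IsChain.append hpc hqc (by simp_all), List.nodup_append'.mpr ⟨hpn, hqn, hpq⟩,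
    by simp [List.head?_append, hpa], by simp [List.getLast?_append, hqd], by simp; omega⟩

end IsDipathFromTo

theorem isDipathFromTo_range' {B : ℕ → ℕ → Prop} {a b : ℕ} (hab : a ≤ b)
    (h : ∀ j, a ≤ j → j < b → B j (j + 1)) :
    IsDipathFromTo B (List.range' a (b - a + 1)) a b (b - a) := by
  refine ⟨(List.isChain_range' a _ 1).imp_of_mem_imp fun i j hi hj hij => ?_, List.nodup_range',
    by simp [List.head?_range'], by simp [List.getLast?_range']; omega, by simp⟩
  subst hij
  simp only [List.mem_range'_1] at hi hj
  exact h i hi.1 (by omega)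

theorem hasC4Subdivision_of_chord_above {B : ℕ → ℕ → Prop} {k t s u m x : ℕ}
    (hpath : ∀ j, t ≤ j → j < m → B j (j + 1)) (hxt : B x t) (hxm : B x m) (hus : B u s)
    (hts : t < s) (hsu : s < u) (hum : u < m) (hmx : m < x)
    (hk₁ : k ≤ s - t + 1) (hk₃ : k ≤ m - u) : HasC4Subdivision B k 1 k 1 :=
  ⟨x, s, u, m, x :: List.range' t (s - t + 1), [u, s], List.range' u (m - u + 1), [x, m],
    by omega, by omega, by omega, by omega, by omega, by omega,
    ((isDipathFromTo_range' hts.le fun j hj _ => hpath j hj (by omega)).cons hxt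
      (by simp; omega)).mono (by omega),
    (IsDipathFromTo.singleton s).cons hus (by simp; omega),
    (isDipathFromTo_range' hum.le fun j hj => hpath j (by omega)).mono hk₃,
    (IsDipathFromTo.singleton m).cons hxm (by simp; omega),
    by grind, by grind, by grind, by grind, by grind, by grind⟩

theorem hasC4Subdivision_of_chords_below {B : ℕ → ℕ → Prop} {k s s' t u u' m x : ℕ}
    (hpath : ∀ j, min s s' ≤ j → j < m → B j (j + 1)) (hxt : B x t) (hxm : B x m)
    (hus : B u s) (hus' : B u' s') (hst : s < t) (hst' : s' < t) (htu : t < u) (huu' : u < u')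
    (hum : u' < m) (hmx : m < x) (hk₁ : k ≤ u - t) (hk₃ : k ≤ m - u') :
    HasC4Subdivision B k 1 k 1 :=
  ⟨x, max s s', u', m, x :: (List.range' t (u - t + 1) ++ List.range' s (max s s' - s + 1)),
    u' :: List.range' s' (max s s' - s' + 1), List.range' u' (m - u' + 1), [x, m],
    by omega, by omega, by omega, by omega, by omega, by omega,
    (((isDipathFromTo_range' htu.le fun j hj _ => hpath j (by omega) (by omega)).append
      (isDipathFromTo_range' (le_max_left s s') fun j hj _ => hpath j (by omega) (by omega)) hus
      (by simp [List.disjoint_left]; omega)).cons hxt (by simp; omega)).mono (by omega),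
    ((isDipathFromTo_range' (le_max_right s s') fun j hj _ => hpath j (by omega) (by omega)).cons
      hus' (by simp; omega)).mono (by omega),
    (isDipathFromTo_range' hum.le fun j hj => hpath j (by omega)).mono hk₃,
    (IsDipathFromTo.singleton m).cons hxm (by simp; omega),
    by grind, by grind, by grind, by grind, by grind, by grind⟩

theorem exists_ne_pair_Icc_avoiding (p q : ℕ) :
    ∃ c c', c ≠ c' ∧ 2 ≤ c ∧ c ≤ 5 ∧ 2 ≤ c' ∧ c' ≤ 5 ∧ c ≠ p ∧ c ≠ q ∧ c' ≠ p ∧ c' ≠ q := by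
  have hcard : 1 < (Finset.Icc 2 5 \ {p, q}).card := by
    have h₁ := Finset.le_card_sdiff {p, q} (Finset.Icc 2 5)
    have h₂ := Finset.card_le_two (a := p) (b := q)
    simp only [Nat.card_Icc] at h₁
    omega
  obtain ⟨c, hc, c', hc', hcc'⟩ := Finset.one_lt_card.mp hcard
  simp only [Finset.mem_sdiff, Finset.mem_Icc, Finset.mem_insert, Finset.mem_singleton,
    not_or] at hc hc'
  exact ⟨c, c', hcc', hc.1.1, hc.1.2, hc'.1.1, hc'.1.2, hc.2.1, hc.2.2, hc'.2.1, hc'.2.2⟩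

namespace SpanningOutTree

variable {A : V → V → Prop} (T : SpanningOutTree A) {x y z : V} {j n : ℕ}

theorem one_le_level (v : V) : 1 ≤ T.level v := by
  by_cases h : v = T.root
  · rw [h, T.level_root]
  · rw [T.level_parent v h]; omega

theorem eq_root_of_level_le_one {v : V} (h : T.level v ≤ 1) : v = T.root := by
  by_contra hv
  have := T.level_parent v hv
  have := T.one_le_level (T.parent v)
  omega

theorem level_iterate_parent {v : V} (h : n < T.level v) :
    T.level (T.parent^[n] v) = T.level v - n := by
  induction n with
  | zero => rfl
  | succ n ih =>
    have hn := ih (by omega)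
    have hroot : T.parent^[n] v ≠ T.root := fun he => by rw [he, T.level_root] at hn; omega
    rw [Function.iterate_succ_apply', T.level_parent _ hroot] at *
    omega

theorem iterate_parent_eq_root {v : V} (h : T.level v ≤ n + 1) : T.parent^[n] v = T.root := by
  have := T.one_le_level v
  obtain ⟨m, rfl⟩ : ∃ m, n = T.level v - 1 + m := ⟨n - (T.level v - 1), by omega⟩
  have hroot : T.parent^[T.level v - 1] v = T.root :=
    T.eq_root_of_level_le_one (by rw [T.level_iterate_parent (by omega)]; omega)
  rw [add_comm, Function.iterate_add_apply, hroot]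
  exact Function.iterate_fixed T.parent_root m

theorem anc_trans (hyz : T.Anc y z) (hzx : T.Anc z x) : T.Anc y x := by
  obtain ⟨n, rfl⟩ := hyz
  obtain ⟨m, rfl⟩ := hzx
  exact ⟨n + m, Function.iterate_add_apply _ n m x⟩

/-- The ancestor of `x` at level `j`, meaningful for `1 ≤ j ≤ T.level x`. -/
def ancAt (x : V) (j : ℕ) : V := T.parent^[T.level x - j] x

theorem level_ancAt (h₁ : 1 ≤ j) (h₂ : j ≤ T.level x) : T.level (T.ancAt x j) = j := by
  rw [ancAt, T.level_iterate_parent (by omega)]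
  omega

theorem ancAt_level (h : T.Anc y x) : T.ancAt x (T.level y) = y := by
  obtain ⟨n, rfl⟩ := h
  by_cases hn : n < T.level x
  · rw [ancAt, T.level_iterate_parent hn, Nat.sub_sub_self hn.le]
  · rw [T.iterate_parent_eq_root (by omega), T.level_root]
    exact T.iterate_parent_eq_root (by omega)

theorem level_le_of_anc (h : T.Anc y x) : T.level y ≤ T.level x := by
  rw [← T.ancAt_level h]
  by_cases hy : T.level y ≤ T.level x
  · rw [T.level_ancAt (T.one_le_level y) hy]; exact hy
  · rw [ancAt, Nat.sub_eq_zero_of_le (by omega)]; rfl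

theorem eq_of_anc_of_level_eq (hy : T.Anc y x) (hz : T.Anc z x) (h : T.level y = T.level z) :
    y = z := by
  rw [← T.ancAt_level hy, h, T.ancAt_level hz]

theorem injOn_ancAt (x : V) : (Set.Icc 1 (T.level x)).InjOn (T.ancAt x) :=
  fun j hj j' hj' h => by rw [← T.level_ancAt hj.1 hj.2, h, T.level_ancAt hj'.1 hj'.2]

theorem ancAt_arc (h₁ : 1 ≤ j) (h₂ : j < T.level x) :
    A (T.ancAt x j) (T.ancAt x (j + 1)) := by
  have hparent : T.ancAt x j = T.parent (T.ancAt x (j + 1)) := by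
    rw [ancAt, ancAt, ← Function.iterate_succ_apply' T.parent]
    congr 1
    omega
  rw [hparent]
  refine T.parent_arc _ fun h => ?_
  have := T.level_ancAt (x := x) (j := j + 1) (by omega) h₂
  rw [h, T.level_root] at this
  omega

/-- The digraph induced by `A` on the ancestors of `x`, with vertices renamed by their levels. -/
def spine (x : V) (j j' : ℕ) : Prop :=
  j ∈ Set.Icc 1 (T.level x) ∧ j' ∈ Set.Icc 1 (T.level x) ∧ A (T.ancAt x j) (T.ancAt x j')

theorem spine_succ (h₁ : 1 ≤ j) (h₂ : j < T.level x) : T.spine x j (j + 1) :=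
  ⟨⟨h₁, h₂.le⟩, ⟨by omega, h₂⟩, T.ancAt_arc h₁ h₂⟩

theorem spine_level (hyz : A y z) (hy : T.Anc y x) (hz : T.Anc z x) :
    T.spine x (T.level y) (T.level z) := by
  refine ⟨⟨T.one_le_level y, T.level_le_of_anc hy⟩, ⟨T.one_le_level z, T.level_le_of_anc hz⟩, ?_⟩
  rwa [T.ancAt_level hy, T.ancAt_level hz]

theorem hasC4Subdivision_of_spine {k₁ k₂ k₃ k₄ : ℕ}
    (h : HasC4Subdivision (T.spine x) k₁ k₂ k₃ k₄) : HasC4Subdivision A k₁ k₂ k₃ k₄ :=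
  h.map (fun _ _ h => h) (T.injOn_ancAt x)

variable (k i : ℕ)

def InLevelClass (x : V) : Prop := ∃ α : ℕ, T.level x = i + α * (2 * k)

def Di2 (x y : V) : Prop :=
  A x y ∧ T.InLevelClass k i x ∧ T.InLevelClass k i y ∧ T.level y < T.level x ∧ T.Anc y x

variable {T k i} {t u u' m σ σ' : V}

theorem InLevelClass.level_add_le (hx : T.InLevelClass k i x) (hy : T.InLevelClass k i y)
    (h : T.level x < T.level y) : T.level x + 2 * k ≤ T.level y := by
  obtain ⟨α, hα⟩ := hx
  obtain ⟨β, hβ⟩ := hy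
  have hαβ : α + 1 ≤ β := Nat.lt_of_mul_lt_mul_right (a := 2 * k) (by omega)
  have := Nat.mul_le_mul_right (2 * k) hαβ
  rw [add_mul, one_mul] at this
  omega

theorem wellFounded_flip_Di2 (k i : ℕ) : WellFounded (flip (T.Di2 k i)) :=
  (measure T.level).wf.mono fun _ _ h => h.2.2.2.1

theorem Di2.eq_of_level_eq (hy : T.Di2 k i x y) (hz : T.Di2 k i x z) (h : T.level y = T.level z) :
    y = z :=
  T.eq_of_anc_of_level_eq hy.2.2.2.2 hz.2.2.2.2 h

/-- Otherwise `x → t ⇝ σ ← u ⇝ m ← x` is a subdivision of `C(k,1,k,1)`. -/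
theorem Di2.level_le_of_lt (hno : ¬ HasC4Subdivision A k 1 k 1) (hxt : T.Di2 k i x t)
    (hxu : T.Di2 k i x u) (hxm : T.Di2 k i x m)
    (hum : T.level u < T.level m) (huσ : T.Di2 k i u σ) : T.level σ ≤ T.level t := by
  by_contra! htσ
  have hσx := T.anc_trans huσ.2.2.2.2 hxu.2.2.2.2
  have := hxt.2.2.1.level_add_le huσ.2.2.1 htσ
  have := hxu.2.2.1.level_add_le hxm.2.2.1 hum
  refine hno (T.hasC4Subdivision_of_spine (x := x) (hasC4Subdivision_of_chord_above
    (fun j hj hjm => T.spine_succ (T.one_le_level t |>.trans hj) (hjm.trans hxm.2.2.2.1))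
    (T.spine_level hxt.1 ⟨0, rfl⟩ hxt.2.2.2.2) (T.spine_level hxm.1 ⟨0, rfl⟩ hxm.2.2.2.2)
    (T.spine_level huσ.1 hxu.2.2.2.2 hσx) htσ huσ.2.2.2.1 hum hxm.2.2.2.1 ?_ ?_))
  all_goals omega

theorem Di2.exists_arc_below_of_two_le_grundy (hno : ¬ HasC4Subdivision A k 1 k 1)
    (hxt : T.Di2 k i x t) (hxu : T.Di2 k i x u) (hxm : T.Di2 k i x m)
    (hum : T.level u < T.level m) (hu : 2 ≤ grundy (T.wellFounded_flip_Di2 k i) u) :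
    ∃ σ, T.Di2 k i u σ ∧ T.level σ < T.level t := by
  obtain ⟨σ₀, hσ₀, hγ₀⟩ := exists_rel_grundy_eq_of_lt (zero_lt_two.trans_le hu)
  obtain ⟨σ₁, hσ₁, hγ₁⟩ := exists_rel_grundy_eq_of_lt (one_lt_two.trans_le hu)
  have hne : T.level σ₀ ≠ T.level σ₁ := fun h => by
    rw [hσ₀.eq_of_level_eq hσ₁ h] at hγ₀
    omega
  have h₀ := Di2.level_le_of_lt hno hxt hxu hxm hum hσ₀
  have h₁ := Di2.level_le_of_lt hno hxt hxu hxm hum hσ₁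
  by_cases h : T.level σ₀ < T.level t
  exacts [⟨σ₀, hσ₀, h⟩, ⟨σ₁, hσ₁, by omega⟩]

/-- `x → t ⇝ u → σ ⇝ w ← σ' ← u' ⇝ m ← x`, with `w` the higher of `σ, σ'`, is a `C(k,1,k,1)`. -/
theorem Di2.false_of_two_arcs_below (hno : ¬ HasC4Subdivision A k 1 k 1) (hxt : T.Di2 k i x t)
    (hxu : T.Di2 k i x u) (hxu' : T.Di2 k i x u') (hxm : T.Di2 k i x m)
    (htu : T.level t < T.level u) (huu' : T.level u < T.level u') (hum : T.level u' < T.level m)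
    (huσ : T.Di2 k i u σ) (hu'σ' : T.Di2 k i u' σ') (hσ : T.level σ < T.level t)
    (hσ' : T.level σ' < T.level t) : False := by
  have := hxt.2.2.1.level_add_le hxu.2.2.1 htu
  have := hxu'.2.2.1.level_add_le hxm.2.2.1 hum
  refine hno (T.hasC4Subdivision_of_spine (x := x) (hasC4Subdivision_of_chords_below
    (fun j hj hjm => T.spine_succ ?_ (hjm.trans hxm.2.2.2.1))
    (T.spine_level hxt.1 ⟨0, rfl⟩ hxt.2.2.2.2) (T.spine_level hxm.1 ⟨0, rfl⟩ hxm.2.2.2.2)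
    (T.spine_level huσ.1 hxu.2.2.2.2 (T.anc_trans huσ.2.2.2.2 hxu.2.2.2.2))
    (T.spine_level hu'σ'.1 hxu'.2.2.2.2 (T.anc_trans hu'σ'.2.2.2.2 hxu'.2.2.2.2))
    hσ hσ' htu huu' hum hxm.2.2.2.1 ?_ ?_))
  · have := T.one_le_level σ
    have := T.one_le_level σ'
    omega
  all_goals omega

theorem grundy_Di2_lt_six [Finite V] (hno : ¬ HasC4Subdivision A k 1 k 1) (x : V) :
    grundy (T.wellFounded_flip_Di2 k i) x < 6 := by
  by_contra! hx
  set γ := grundy (T.wellFounded_flip_Di2 k i)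
  have hfin : {y | T.Di2 k i x y}.Finite := Set.toFinite _
  obtain ⟨t₀, ht₀, -⟩ := exists_rel_grundy_eq_of_lt (c := 0) (by omega : 0 < γ x)
  obtain ⟨t, ht, htmin⟩ := Set.exists_min_image _ T.level hfin ⟨t₀, ht₀⟩
  obtain ⟨m, hm, hmmax⟩ := Set.exists_max_image _ T.level hfin ⟨t₀, ht₀⟩
  have between : ∀ {u}, T.Di2 k i x u → γ u ≠ γ t → γ u ≠ γ m →
      T.level t < T.level u ∧ T.level u < T.level m := fun {u} hu hut hum =>
    ⟨(htmin u hu).lt_of_ne fun h => hut (by rw [ht.eq_of_level_eq hu h]),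
      (hmmax u hu).lt_of_ne fun h => hum (by rw [hu.eq_of_level_eq hm h])⟩
  obtain ⟨c, c', hcc', hc₂, hc₅, hc'₂, hc'₅, hct, hcm, hc't, hc'm⟩ :=
    exists_ne_pair_Icc_avoiding (γ t) (γ m)
  obtain ⟨u, hu, rfl⟩ := exists_rel_grundy_eq_of_lt (c := c) (by omega : c < γ x)
  obtain ⟨u', hu', rfl⟩ := exists_rel_grundy_eq_of_lt (c := c') (by omega : c' < γ x)
  obtain ⟨htu, hum⟩ := between hu hct hcm
  obtain ⟨htu', hu'm⟩ := between hu' hc't hc'm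
  obtain ⟨σ, hσ, hσt⟩ := Di2.exists_arc_below_of_two_le_grundy hno ht hu hm hum (by omega)
  obtain ⟨σ', hσ', hσ't⟩ := Di2.exists_arc_below_of_two_le_grundy hno ht hu' hm hu'm (by omega)
  rcases lt_trichotomy (T.level u) (T.level u') with h | h | h
  · exact Di2.false_of_two_arcs_below hno ht hu hu' hm htu h hu'm hσ hσ' hσt hσ't
  · exact hcc' (by rw [hu.eq_of_level_eq hu' h])
  · exact Di2.false_of_two_arcs_below hno ht hu' hu hm htu' h hum hσ' hσ hσ't hσt

end SpanningOutTree

theorem chromatic_Di2_le_six_general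
    {V : Type*} [Fintype V] (A : V → V → Prop)
    (k : ℕ)
    (T : SpanningOutTree A)
    (hno : ¬ HasC4Subdivision A k 1 k 1)
    (i : ℕ) :
    (underlying (fun x y : V =>
        A x y ∧
        (∃ α : ℕ, T.level x = i + α * (2 * k)) ∧
        (∃ α : ℕ, T.level y = i + α * (2 * k)) ∧
        T.level y < T.level x ∧ T.Anc y x)).chromaticNumber ≤ 6 := by
  have hcol : (underlying (T.Di2 k i)).Colorable 6 :=
    colorable_underlying_of_grundy_lt (T.grundy_Di2_lt_six hno)
  exact_mod_cast hcol.chromaticNumber_le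

/-- With the level decomposition of a digraph `D` with a final spanning out-tree `T`
and no subdivision of `C(k,1,k,1)`: for `1 ≤ i ≤ 2k`, the spanning subdigraph
`D_i^2` of `D_i = D[V_i]` with arc set
`A_2 = {(x,y) : l_T(x) > l_T(y) and y is an ancestor of x}`
has chromatic number at most `6`. -/
theorem chromatic_Di2_le_six
    {V : Type*} [Fintype V] (A : V → V → Prop) (hirr : ∀ v : V, ¬ A v v)
    (k : ℕ) (hk : 0 < k)
    (T : SpanningOutTree A) (hfin : T.IsFinal)
    (hno : ¬ HasC4Subdivision A k 1 k 1)
    (i : ℕ) (hi1 : 1 ≤ i) (hi2 : i ≤ 2 * k) :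
    (underlying (fun x y : V =>
        A x y ∧
        (∃ α : ℕ, T.level x = i + α * (2 * k)) ∧
        (∃ α : ℕ, T.level y = i + α * (2 * k)) ∧
        T.level y < T.level x ∧ T.Anc y x)).chromaticNumber ≤ 6 :=
  chromatic_Di2_le_six_general A k T hno i
end

section
/- Every digraph D that has a spanning out-tree also has a final spanning out-tree, i.e., a spanning out-tree T such that for every backward arc (x,y) of D with respect to T, the vertex y is an ancestor of x in T. -/
variable {V : Type*}

/-!
Among all spanning out-trees take one maximising the sum of the levels; the sum is bounded by
`|V|²`, since the tree path to a vertex visits distinct vertices. If this tree `T` had a backward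
arc `(x,y)` with `y` not an ancestor of `x`, replacing the tree arc into `y` by `(x,y)` would hang
the subtree of `y` below `x`, raising every level in it by `l_T(x) + 1 - l_T(y) ≥ 1` and
contradicting maximality.
-/

namespace SpanningOutTree

variable {A : V → V → Prop}

lemma level_iterate_parent_add (T : SpanningOutTree A) (v : V) :
    ∀ i < T.level v, T.level (T.parent^[i] v) + i = T.level v := by
  intro i
  induction i with
  | zero => simp
  | succ i ih =>
    intro hi
    have hlevel := ih (by omega)
    have hne : T.parent^[i] v ≠ T.root := by
      intro hroot
      rw [hroot, T.level_root] at hlevel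
      omega
    rw [Function.iterate_succ_apply']
    have := T.level_parent _ hne
    omega

lemma level_le_card [Fintype V] (T : SpanningOutTree A) (v : V) :
    T.level v ≤ Fintype.card V := by
  have hinj : Function.Injective fun i : Fin (T.level v) => T.parent^[i] v := by
    intro i j hij
    have hi := T.level_iterate_parent_add v i i.2
    have hj := T.level_iterate_parent_add v j j.2
    simp only at hij
    rw [hij] at hi
    ext
    omega
  simpa using Fintype.card_le_of_injective _ hinj

lemma sum_level_le_card_mul_card [Fintype V] (T : SpanningOutTree A) :
    ∑ v, T.level v ≤ Fintype.card V * Fintype.card V := by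
  calc ∑ v, T.level v ≤ ∑ _v : V, Fintype.card V :=
        Finset.sum_le_sum fun v _ => T.level_le_card v
    _ = Fintype.card V * Fintype.card V := by simp

lemma Anc.of_parent {T : SpanningOutTree A} {y v : V} (h : T.Anc y (T.parent v)) :
    T.Anc y v := by
  obtain ⟨n, hn⟩ := h
  exact ⟨n + 1, by rwa [Function.iterate_succ_apply]⟩

lemma Anc.parent_of_ne {T : SpanningOutTree A} {y v : V} (h : T.Anc y v) (hne : v ≠ y) :
    T.Anc y (T.parent v) := by
  obtain ⟨_ | n, hn⟩ := h
  · exact absurd hn hne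
  · exact ⟨n, by rwa [Function.iterate_succ_apply] at hn⟩

lemma anc_root (T : SpanningOutTree A) (x : V) : T.Anc T.root x := by
  induction hx : T.level x using Nat.strong_induction_on generalizing x with
  | _ n ih =>
    by_cases hroot : x = T.root
    · exact ⟨0, hroot⟩
    · have := T.level_parent x hroot
      exact (ih _ (by omega) (T.parent x) rfl).of_parent

lemma ne_root_of_not_anc (T : SpanningOutTree A) {x y : V} (h : ¬ T.Anc y x) : y ≠ T.root :=
  fun hy => h (hy ▸ T.anc_root x)

lemma anc_of_root_iff (T : SpanningOutTree A) {y : V} : T.Anc y T.root ↔ y = T.root := by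
  refine ⟨fun ⟨n, hn⟩ => ?_, fun h => ⟨0, h.symm⟩⟩
  rw [Function.iterate_fixed T.parent_root] at hn
  exact hn.symm

open Classical in
noncomputable def reroute (T : SpanningOutTree A) {x y : V} (hA : A x y) (hyx : ¬ T.Anc y x)
    (hle : T.level y ≤ T.level x + 1) : SpanningOutTree A where
  root := T.root
  parent := Function.update T.parent y x
  level v := if T.Anc y v then T.level v + (T.level x + 1 - T.level y) else T.level v
  parent_root := by
    rw [Function.update_of_ne (T.ne_root_of_not_anc hyx).symm, T.parent_root]
  parent_arc v hv := by
    by_cases hvy : v = y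
    · subst hvy
      rwa [Function.update_self]
    · rw [Function.update_of_ne hvy]
      exact T.parent_arc v hv
  level_root := by
    simp only [T.anc_of_root_iff, T.ne_root_of_not_anc hyx, if_false, T.level_root]
  level_parent v hv := by
    by_cases hvy : v = y
    · subst hvy
      simp only [Function.update_self, hyx, if_false, show T.Anc v v from ⟨0, rfl⟩, if_true]
      omega
    · have hlevel := T.level_parent v hv
      rw [Function.update_of_ne hvy]
      by_cases hanc : T.Anc y v
      · simp only [hanc, hanc.parent_of_ne hvy, if_true]
        omega
      · have hanc' : ¬ T.Anc y (T.parent v) := fun h => hanc h.of_parent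
        simp only [hanc, hanc', if_false]
        exact hlevel

lemma sum_level_lt_sum_level_reroute [Fintype V] (T : SpanningOutTree A) {x y : V}
    (hA : A x y) (hyx : ¬ T.Anc y x) (hback : T.level y ≤ T.level x) :
    ∑ v, T.level v < ∑ v, (T.reroute hA hyx (by omega)).level v := by
  refine Finset.sum_lt_sum (fun v _ => ?_) ⟨y, Finset.mem_univ y, ?_⟩
  · simp only [reroute]
    split <;> omega
  · simp only [reroute, show T.Anc y y from ⟨0, rfl⟩, if_true]
    omega

lemma exists_sum_level_lt_of_not_isFinal [Fintype V] (T : SpanningOutTree A)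
    (hT : ¬ T.IsFinal) : ∃ T' : SpanningOutTree A, ∑ v, T.level v < ∑ v, T'.level v := by
  simp only [IsFinal, not_forall] at hT
  obtain ⟨x, y, hA, hback, hyx⟩ := hT
  exact ⟨_, T.sum_level_lt_sum_level_reroute hA hyx hback⟩

end SpanningOutTree

theorem exists_final_spanning_out_tree_general
    {V : Type*} [Fintype V] (A : V → V → Prop)
    (T : SpanningOutTree A) :
    ∃ T' : SpanningOutTree A, T'.IsFinal := by
  let deficit (T' : SpanningOutTree A) : ℕ := Fintype.card V * Fintype.card V - ∑ v, T'.level v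
  obtain ⟨T₀, -, hmin⟩ := (measure deficit).wf.has_min Set.univ ⟨T, trivial⟩
  refine ⟨T₀, by_contra fun hT₀ => ?_⟩
  obtain ⟨T', hlt⟩ := T₀.exists_sum_level_lt_of_not_isFinal hT₀
  have hbound := T'.sum_level_le_card_mul_card
  exact hmin T' trivial (show deficit T' < deficit T₀ by simp only [deficit]; omega)

/-- Every digraph having a spanning out-tree has a final spanning out-tree. -/
theorem exists_final_spanning_out_tree
    {V : Type*} [Fintype V] (A : V → V → Prop) (hirr : ∀ v : V, ¬ A v v)
    (T : SpanningOutTree A) :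
    ∃ T' : SpanningOutTree A, T'.IsFinal :=
  exists_final_spanning_out_tree_general A T
end

section
/- For any integer k ≥ 4, if G is a k-wheel-free graph, then G is (k+1)-colorable. -/
variable {V : Type*}

/-- `G` contains a `k`-wheel as a subgraph: a cycle `C` together with a vertex `u`
not on `C` having at least `k` neighbors on `C`. -/
def HasKWheel (G : SimpleGraph V) (k : ℕ) : Prop :=
  ∃ (m : ℕ) (f : ZMod m → V) (u : V),
    3 ≤ m ∧ Function.Injective f ∧ (∀ i : ZMod m, G.Adj (f i) (f (i + 1))) ∧
    u ∉ Set.range f ∧ k ≤ {v : V | v ∈ Set.range f ∧ G.Adj u v}.ncard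

/-!
A graph whose minimum degree exceeds `k ≥ 2` contains a `k`-wheel, so a `k`-wheel-free graph has a
vertex of degree at most `k`; deleting it and colouring the rest inductively gives a
`(k + 1)`-colouring.

For the wheel, take a longest path `q 0, q 1, …`: every neighbour of `q 0` lies on it. Among such
paths choose one minimising the largest index `f` of a neighbour of `q 0`, and let `i₂ ≥ 2` be the
least index of a neighbour of `q 0` other than `q 1`. If `q (i₂ - 1)` is adjacent to some `q b`
with `b ≥ f`, the cycle `q (i₂ - 1), …, q b` avoids `q 0` and passes through at least `k` of its
neighbours. Otherwise the Pósa rotation `q (i₂ - 1), …, q 0, q i₂, …` is a path of the same length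
whose start has all its neighbours before index `f`, contradicting minimality.
-/

open Finset SimpleGraph

variable {G : SimpleGraph V} {k : ℕ}

theorem HasKWheel.map {W : Type*} {H : SimpleGraph W} (φ : G ↪g H) (h : HasKWheel G k) :
    HasKWheel H k := by
  obtain ⟨m, f, u, hm, hf, hadj, hu, hk⟩ := h
  have : NeZero m := ⟨by omega⟩
  refine ⟨m, φ ∘ f, φ u, hm, φ.injective.comp hf, fun i => φ.map_rel_iff.2 (hadj i), ?_, ?_⟩
  · rintro ⟨i, hi⟩
    exact hu ⟨i, φ.injective hi⟩
  · calc k ≤ _ := hk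
      _ = (φ '' {v | v ∈ Set.range f ∧ G.Adj u v}).ncard :=
        (Set.ncard_image_of_injective _ φ.injective).symm
      _ ≤ _ := by
        refine Set.ncard_le_ncard ?_ ((Set.finite_range (φ ∘ f)).subset fun v hv => hv.1)
        rintro _ ⟨v, ⟨⟨i, rfl⟩, hv⟩, rfl⟩
        exact ⟨⟨i, rfl⟩, φ.map_rel_iff.2 hv⟩

structure IsPathSeq (G : SimpleGraph V) (q : ℕ → V) (L : ℕ) : Prop where
  injOn : Set.InjOn q (Set.Iio L)
  adj : ∀ i, i + 1 < L → G.Adj (q i) (q (i + 1))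

namespace IsPathSeq

variable {q : ℕ → V} {L : ℕ}

theorem mono (hq : IsPathSeq G q L) {L' : ℕ} (hL : L' ≤ L) : IsPathSeq G q L' :=
  ⟨hq.injOn.mono (Set.Iio_subset_Iio hL), fun i hi => hq.adj i (by omega)⟩

theorem drop (hq : IsPathSeq G q L) (s : ℕ) : IsPathSeq G (fun i => q (s + i)) (L - s) := by
  refine ⟨fun i hi j hj hij => ?_, fun i hi => hq.adj (s + i) (by omega)⟩
  simp only [Set.mem_Iio] at hi hj
  have := hq.injOn (show s + i < L by omega) (show s + j < L by omega) hij
  omega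

theorem length_le_card [Fintype V] (hq : IsPathSeq G q L) : L ≤ Fintype.card V := by
  simpa using card_le_card_of_injOn q (s := range L) (t := univ)
    (fun _ _ => mem_coe.2 (mem_univ _)) (hq.injOn.mono fun _ => mem_range.1)

theorem cons (hq : IsPathSeq G q L) {y : V} (hy : G.Adj y (q 0)) (hyq : ∀ i < L, q i ≠ y) :
    IsPathSeq G (fun i => if i = 0 then y else q (i - 1)) (L + 1) := by
  refine ⟨fun i hi j hj hij => ?_, fun i hi => ?_⟩
  · simp only [Set.mem_Iio] at hi hj
    rcases i with _ | i <;> rcases j with _ | j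
    · rfl
    · simp only [↓reduceIte, Nat.add_one_ne_zero, add_tsub_cancel_right] at hij
      exact absurd hij.symm (hyq j (by omega))
    · simp only [↓reduceIte, Nat.add_one_ne_zero, add_tsub_cancel_right] at hij
      exact absurd hij (hyq i (by omega))
    · simp only [Nat.add_one_ne_zero, ↓reduceIte, add_tsub_cancel_right] at hij
      rw [hq.injOn (show i < L by omega) (show j < L by omega) hij]
  · rcases i with _ | i
    · simpa using hy
    · simpa using hq.adj i (by omega)

/-- Pósa rotation: the edge `q 0 — q (s + 1)` lets us reverse the initial segment `q 0, …, q s`. -/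
theorem rotate (hq : IsPathSeq G q L) {s : ℕ} (hs : s + 1 < L) (h : G.Adj (q 0) (q (s + 1))) :
    IsPathSeq G (fun i => if i ≤ s then q (s - i) else q i) L := by
  refine ⟨fun i hi j hj hij => ?_, fun i hi => ?_⟩
  · simp only [Set.mem_Iio] at hi hj
    split_ifs at hij with h₁ h₂ h₂
    all_goals have := hq.injOn (Set.mem_Iio.2 (by omega)) (Set.mem_Iio.2 (by omega)) hij
    all_goals omega
  · rcases lt_trichotomy i s with his | rfl | his
    · simp only [show i ≤ s by omega, show i + 1 ≤ s by omega, ↓reduceIte]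
      have := hq.adj (s - (i + 1)) (by omega)
      rwa [show s - (i + 1) + 1 = s - i by omega, G.adj_comm] at this
    · simpa using h
    · simp only [show ¬i ≤ s by omega, show ¬i + 1 ≤ s by omega, ↓reduceIte]
      exact hq.adj i hi

end IsPathSeq

theorem hasKWheel_of_cycle [DecidableRel G.Adj] {q : ℕ → V} {n : ℕ} (hn : 2 ≤ n)
    (hq : IsPathSeq G q (n + 1)) (hclose : G.Adj (q n) (q 0)) {u : V} (hu : ∀ i ≤ n, q i ≠ u)
    (hk : k ≤ #{i ∈ range (n + 1) | G.Adj u (q i)}) : HasKWheel G k := by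
  classical
  have hval (i : ZMod (n + 1)) : i.val ≤ n := Nat.lt_succ_iff.1 (ZMod.val_lt i)
  refine ⟨n + 1, fun i => q i.val, u, by omega, fun i j hij => ?_, fun i => ?_, ?_, ?_⟩
  · exact ZMod.val_injective _
      (hq.injOn (Nat.lt_succ_of_le (hval i)) (Nat.lt_succ_of_le (hval j)) hij)
  · show G.Adj (q i.val) (q (i + 1).val)
    rw [ZMod.val_add, ZMod.val_one_eq_one_mod, Nat.add_mod_mod]
    rcases (hval i).lt_or_eq with hi | hi
    · rw [Nat.mod_eq_of_lt (by omega)]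
      exact hq.adj _ (by omega)
    · rwa [hi, Nat.mod_self]
  · rintro ⟨i, hi⟩
    exact hu _ (hval i) hi
  · calc k ≤ _ := hk
      _ = #(image q {i ∈ range (n + 1) | G.Adj u (q i)}) :=
        (card_image_of_injOn (hq.injOn.mono fun i hi => mem_range.1 (mem_filter.1 hi).1)).symm
      _ = (↑(image q {i ∈ range (n + 1) | G.Adj u (q i)}) : Set V).ncard :=
        (Set.ncard_coe_finset _).symm
      _ ≤ _ := by
        refine Set.ncard_le_ncard ?_ ((Set.finite_range _).subset fun v hv => hv.1)
        intro v hv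
        simp only [coe_image, coe_filter, mem_range, Set.mem_image] at hv
        obtain ⟨i, ⟨hi, hadj⟩, rfl⟩ := hv
        exact ⟨⟨i, by simp only [ZMod.val_cast_of_lt hi]⟩, hadj⟩

theorem IsPathSeq.hasKWheel_of_chord [DecidableRel G.Adj] {q : ℕ → V} {L s b : ℕ}
    (hq : IsPathSeq G q L) (hs : 1 ≤ s) (hsb : s + 2 ≤ b) (hbL : b < L)
    (hchord : G.Adj (q s) (q b)) (hk : k ≤ #{i ∈ Icc s b | G.Adj (q 0) (q i)}) :
    HasKWheel G k := by
  refine hasKWheel_of_cycle (q := fun i => q (s + i)) (n := b - s) (u := q 0) (by omega)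
    ((hq.drop s).mono (by omega)) ?_ (fun i hi h => ?_) ?_
  · simpa [show s + (b - s) = b by omega] using hchord.symm
  · have := hq.injOn (show s + i < L by omega) (show 0 < L by omega) h
    omega
  · refine hk.trans (card_le_card_of_injOn (· - s) (fun i hi => ?_) fun i hi j hj hij => ?_)
    · simp only [coe_filter, mem_Icc, Set.mem_ofPred] at hi
      simp only [coe_filter, mem_range, Set.mem_ofPred, show s + (i - s) = i by omega]
      exact ⟨by omega, hi.2⟩
    · simp only [coe_filter, mem_Icc, Set.mem_ofPred] at hi hj hij
      omega

theorem degree_le_card_filter_adj_add_one [Fintype V] [DecidableRel G.Adj] {q : ℕ → V} {L : ℕ}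
    (hnbr : ∀ v, G.Adj (q 0) v → ∃ i < L, q i = v) :
    G.degree (q 0) ≤ #{i ∈ range L | 2 ≤ i ∧ G.Adj (q 0) (q i)} + 1 := by
  classical
  have hsub : G.neighborFinset (q 0) ⊆
      image q (insert 1 {i ∈ range L | 2 ≤ i ∧ G.Adj (q 0) (q i)}) := by
    intro v hv
    rw [mem_neighborFinset] at hv
    obtain ⟨i, hi, rfl⟩ := hnbr v hv
    have : i ≠ 0 := by rintro rfl; exact G.irrefl hv
    refine mem_image_of_mem q ?_
    rcases (show i = 1 ∨ 2 ≤ i by omega) with rfl | h2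
    · exact mem_insert_self _ _
    · exact mem_insert_of_mem (mem_filter.2 ⟨mem_range.2 hi, h2, hv⟩)
  rw [← card_neighborFinset_eq_degree]
  exact (card_le_card hsub).trans (card_image_le.trans (card_insert_le _ _))

theorem exists_isPathSeq_forall_adj_mem [Fintype V] [Nonempty V] :
    ∃ L, (∃ q, IsPathSeq G q L) ∧
      ∀ q, IsPathSeq G q L → ∀ v, G.Adj (q 0) v → ∃ i < L, q i = v := by
  classical
  let P L := ∃ q, IsPathSeq G q L
  have hP0 : P 0 :=
    ⟨fun _ => Classical.arbitrary V, fun i hi => absurd hi (Nat.not_lt_zero i), by omega⟩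
  refine ⟨Nat.findGreatest P (Fintype.card V), Nat.findGreatest_spec (Nat.zero_le _) hP0,
    fun q hq v hv => ?_⟩
  by_contra! hvq
  have hlong := hq.cons hv.symm hvq
  exact Nat.findGreatest_is_greatest (Nat.lt_succ_self _) hlong.length_le_card ⟨_, hlong⟩

theorem IsPathSeq.hasKWheel_or_rotate [Fintype V] [DecidableRel G.Adj] {q : ℕ → V} {L f : ℕ}
    (hk : 2 ≤ k) (hq : IsPathSeq G q L) (hdeg : k < G.degree (q 0))
    (hnbr : ∀ v, G.Adj (q 0) v → ∃ i < L, q i = v) (hf : ∀ i < L, G.Adj (q 0) (q i) → i < f) :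
    HasKWheel G k ∨ ∃ q', IsPathSeq G q' L ∧ ∀ i < L, G.Adj (q' 0) (q' i) → i + 1 < f := by
  have hJ := degree_le_card_filter_adj_add_one hnbr
  set J := {i ∈ range L | 2 ≤ i ∧ G.Adj (q 0) (q i)}
  replace hJ : k ≤ #J := by omega
  have hJne : J.Nonempty := card_pos.1 (by omega)
  set i₂ := J.min' hJne
  obtain ⟨hi₂L, hi₂, hadj₂⟩ : i₂ < L ∧ 2 ≤ i₂ ∧ G.Adj (q 0) (q i₂) := by
    simpa only [J, mem_filter, mem_range] using J.min'_mem hJne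
  have hJ_bounds : ∀ i ∈ J, i₂ ≤ i ∧ i < f := fun i hi =>
    ⟨J.min'_le i hi, hf i (mem_range.1 (mem_filter.1 hi).1) (mem_filter.1 hi).2.2⟩
  obtain ⟨i₃, hi₃, hne⟩ := exists_mem_ne (by omega : 1 < #J) i₂
  have hi₃f := hJ_bounds i₃ hi₃
  by_cases hchord : ∃ b, f ≤ b + 1 ∧ b < L ∧ G.Adj (q (i₂ - 1)) (q b)
  · obtain ⟨b, hfb, hbL, hb⟩ := hchord
    refine .inl (hq.hasKWheel_of_chord (by omega) (by omega) hbL hb (hJ.trans (card_le_card ?_)))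
    intro i hi
    have := hJ_bounds i hi
    exact mem_filter.2 ⟨mem_Icc.2 ⟨by omega, by omega⟩, (mem_filter.1 hi).2.2⟩
  · push Not at hchord
    refine .inr ⟨_, hq.rotate (s := i₂ - 1) (by omega) (by rwa [Nat.sub_add_cancel (by omega)]),
      fun i hi h => ?_⟩
    simp only [Nat.zero_le, ↓reduceIte, Nat.sub_zero] at h
    split_ifs at h with his
    · omega
    · by_contra! hfi
      exact hchord i hfi hi h

theorem hasKWheel_of_forall_lt_degree [Fintype V] [DecidableRel G.Adj] [Nonempty V] (hk : 2 ≤ k)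
    (hdeg : ∀ v, k < G.degree v) : HasKWheel G k := by
  obtain ⟨L, ⟨q, hq⟩, hnbr⟩ := exists_isPathSeq_forall_adj_mem (G := G)
  suffices ∀ f q, IsPathSeq G q L → (∀ i < L, G.Adj (q 0) (q i) → i < f) → HasKWheel G k from
    this L q hq fun i hi _ => hi
  intro f
  induction f with
  | zero =>
    intro q hq hf
    obtain ⟨v, hv⟩ := (G.degree_pos_iff_exists_adj (q 0)).1 (by have := hdeg (q 0); omega)
    obtain ⟨i, hi, rfl⟩ := hnbr q hq v hv
    exact absurd (hf i hi hv) (Nat.not_lt_zero i)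
  | succ f ih =>
    intro q hq hf
    obtain h | ⟨q', hq', hf'⟩ := hq.hasKWheel_or_rotate hk (hdeg _) (hnbr q hq) hf
    · exact h
    · exact ih q' hq' fun i hi h => Nat.succ_lt_succ_iff.1 (hf' i hi h)

theorem SimpleGraph.colorable_of_induce_compl_singleton {n : ℕ} {v : V}
    [Fintype (G.neighborSet v)] (hv : G.degree v < n)
    (h : (G.induce ({v}ᶜ : Set V)).Colorable n) : G.Colorable n := by
  classical
  obtain ⟨c⟩ := h
  let used : Finset (Fin n) := (G.neighborFinset v).attach.image fun w =>
    c ⟨w.1, (G.ne_of_adj ((G.mem_neighborFinset _ _).1 w.2)).symm⟩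
  obtain ⟨a, -, ha⟩ := exists_mem_notMem_of_card_lt_card (s := used) (t := univ) <| by
    calc #used ≤ #(G.neighborFinset v).attach := card_image_le
      _ = G.degree v := by rw [card_attach, card_neighborFinset_eq_degree]
      _ < n := hv
      _ = #(univ : Finset (Fin n)) := by simp
  have hfree : ∀ w (hw : w ∈ ({v}ᶜ : Set V)), G.Adj v w → c ⟨w, hw⟩ ≠ a := by
    rintro w hw hvw rfl
    exact ha (mem_image.2 ⟨⟨w, (G.mem_neighborFinset _ _).2 hvw⟩, mem_attach _ _, rfl⟩)
  refine ⟨Coloring.mk (fun w => if hw : w = v then a else c ⟨w, hw⟩) fun {x y} hxy => ?_⟩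
  by_cases hx : x = v <;> by_cases hy : y = v
  · exact absurd (hx.trans hy.symm) hxy.ne
  · subst hx
    simpa [hy] using (hfree y hy hxy).symm
  · subst hy
    simpa [hx] using hfree x hx hxy.symm
  · simpa [hx, hy] using c.valid (show (G.induce ({v}ᶜ : Set V)).Adj ⟨x, hx⟩ ⟨y, hy⟩ from hxy)

theorem colorable_of_not_hasKWheel [Fintype V] (hk : 2 ≤ k) (h : ¬HasKWheel G k) :
    G.Colorable (k + 1) := by
  classical
  induction hn : Fintype.card V generalizing V with
  | zero =>
    have := Fintype.card_eq_zero_iff.1 hn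
    exact .of_isEmpty _
  | succ n ih =>
    have : Nonempty V := Fintype.card_pos_iff.1 (by omega)
    obtain ⟨v, hv⟩ : ∃ v, G.degree v ≤ k := by
      by_contra! hdeg
      exact h (hasKWheel_of_forall_lt_degree hk hdeg)
    refine G.colorable_of_induce_compl_singleton (v := v) (by omega)
      (ih (fun hw => h (hw.map (Embedding.induce _))) ?_)
    rw [Fintype.card_compl_set, hn]
    simp

/-- For any integer `k ≥ 4`, every `k`-wheel-free graph is `(k+1)`-colorable. -/
theorem wheel_free_colorable
    {V : Type*} [Fintype V] (G : SimpleGraph V)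
    (k : ℕ) (hk : 4 ≤ k) (hfree : ¬ HasKWheel G k) :
    G.chromaticNumber ≤ ((k + 1 : ℕ) : ℕ∞) :=
  (colorable_of_not_hasKWheel (by omega) hfree).chromaticNumber_le
end

section
/- For any integer k ≥ 4, if G is a k-wheel-free graph, then G contains a vertex of degree at most k. -/
variable {V : Type*}

/-!
Suppose every vertex has degree greater than `k`. Among the longest paths choose one, `P`, whose
first vertex has its last neighbour `P t` on `P` as far along as possible, and let `C` be the
cycle `P 0, …, P t`. By maximality, the neighbours of the first vertex of any longest path lie
among its first `t + 1` vertices, so for the longest paths that begin with the vertices of `C`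
(in any order) they lie on `C`; Pósa rotations at positions `≤ t` preserve this class.

Now let such a path begin with an arc `C 0, …, C a` of a labelling of `C`, with a chord
`C a — C (-1)` (as `P` does with `a = t - 1`). If `C 0` has a neighbour `C j` with
`2 ≤ j < a`, rotating at `j` gives a path beginning with the shorter arc `C (j - 1), …, C 0`,
with the chord `C 0 — C j`. Otherwise the chord closes the cycle `C a, …, C (-1)`, which avoids
`C 0` and contains all its neighbours but possibly `C 1`.
-/

open Set

namespace SimpleGraph

structure IsCycleMap (G : SimpleGraph V) {N : ℕ} (C : ZMod N → V) : Prop where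
  injective : Function.Injective C
  adj : ∀ r, G.Adj (C r) (C (r + 1))

structure IsPathMap (G : SimpleGraph V) (n : ℕ) (f : ℕ → V) : Prop where
  injOn : InjOn f (Iio n)
  adj : ∀ p, p + 1 < n → G.Adj (f p) (f (p + 1))

variable {G : SimpleGraph V} {k m n N : ℕ}

theorem IsCycleMap.hasKWheel [NeZero N] {C : ZMod N → V} (hC : G.IsCycleMap C) {u : V}
    (hu : u ∉ range C) (hk : 3 ≤ k) (hspokes : k ≤ {v | v ∈ range C ∧ G.Adj u v}.ncard) :
    HasKWheel G k := by
  have hN : {v | v ∈ range C ∧ G.Adj u v}.ncard ≤ N :=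
    calc _ ≤ (range C).ncard := ncard_le_ncard (fun _ hv => hv.1) (finite_range C)
      _ = N := by rw [ncard_range_of_injective hC.injective, Nat.card_zmod]
  exact ⟨N, C, u, by omega, hC.injective, hC.adj, hu, hspokes⟩

theorem IsCycleMap.reflect {C : ZMod N → V} (hC : G.IsCycleMap C) (c : ZMod N) :
    G.IsCycleMap (fun r => C (c - r)) where
  injective _ _ h := sub_right_injective (hC.injective h)
  adj r := by simpa [sub_add_eq_sub_sub] using (hC.adj (c - r - 1)).symm

theorem range_reflect (C : ZMod N → V) (c : ZMod N) : range (fun r => C (c - r)) = range C :=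
  (Equiv.subLeft c).surjective.range_comp C

theorem IsPathMap.mono {f : ℕ → V} (hf : G.IsPathMap n f) (hmn : m ≤ n) :
    G.IsPathMap m f where
  injOn := hf.injOn.mono (Iio_subset_Iio hmn)
  adj p hp := hf.adj p (by omega)

theorem IsPathMap.isCycleMap [NeZero m] {f : ℕ → V} (hf : G.IsPathMap m f)
    (hclose : G.Adj (f (m - 1)) (f 0)) : G.IsCycleMap (fun r : ZMod m => f r.val) := by
  constructor
  · intro r s h
    exact ZMod.val_injective _ (hf.injOn r.val_lt s.val_lt h)
  · intro r
    have hr := r.val_lt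
    have hsucc : (r + 1).val = (r.val + 1) % m := by
      rw [← ZMod.val_natCast, Nat.cast_add, ZMod.natCast_zmod_val, Nat.cast_one]
    simp only [hsucc]
    rcases Nat.lt_or_ge (r.val + 1) m with hlt | hge
    · rw [Nat.mod_eq_of_lt hlt]
      exact hf.adj _ hlt
    · rw [show r.val + 1 = m by omega, Nat.mod_self, show r.val = m - 1 by omega]
      exact hclose

theorem range_comp_val [NeZero m] (f : ℕ → V) :
    range (fun r : ZMod m => f r.val) = f '' Iio m := by
  ext v
  constructor
  · rintro ⟨r, rfl⟩
    exact ⟨r.val, r.val_lt, rfl⟩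
  · rintro ⟨p, hp, rfl⟩
    exact ⟨p, by simp only [ZMod.val_natCast_of_lt hp]⟩

theorem IsCycleMap.isPathMap_arc {C : ZMod N → V} (hC : G.IsCycleMap C) (a : ℕ) :
    G.IsPathMap (N - a) (fun p => C ↑(a + p)) where
  injOn p hp q hq h := by
    simp only [mem_Iio] at hp hq
    have hval := congrArg ZMod.val (hC.injective h)
    rw [ZMod.val_natCast_of_lt (by omega), ZMod.val_natCast_of_lt (by omega)] at hval
    omega
  adj p _ := by simpa [← add_assoc] using hC.adj ↑(a + p)

def shortcut (C : ZMod N → V) (a : ℕ) : ZMod (N - a) → V := fun q => C ↑(a + q.val)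

theorem IsCycleMap.shortcut {C : ZMod N → V} (hC : G.IsCycleMap C) {a : ℕ} (haN : a < N)
    (hchord : G.Adj (C a) (C (-1))) : G.IsCycleMap (shortcut C a) := by
  have : NeZero (N - a) := ⟨by omega⟩
  refine (hC.isPathMap_arc a).isCycleMap ?_
  have hlast : ((a + (N - a - 1) : ℕ) : ZMod N) = -1 := by
    rw [show a + (N - a - 1) = (N - 1 : ℕ) by omega, Nat.cast_sub (by omega),
      ZMod.natCast_self, Nat.cast_one, zero_sub]
  simpa [hlast] using hchord.symm

theorem apply_mem_range_shortcut_iff [NeZero N] {C : ZMod N → V} (hC : Function.Injective C)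
    {a : ℕ} (haN : a < N) (r : ZMod N) : C r ∈ range (shortcut C a) ↔ a ≤ r.val := by
  have : NeZero (N - a) := ⟨by omega⟩
  constructor
  · rintro ⟨q, hq⟩
    have := congrArg ZMod.val (hC hq)
    rw [ZMod.val_natCast_of_lt (by have := q.val_lt; omega)] at this
    omega
  · intro har
    refine ⟨((r.val - a : ℕ) : ZMod (N - a)), ?_⟩
    rw [SimpleGraph.shortcut, ZMod.val_natCast_of_lt (by have := r.val_lt; omega),
      show a + (r.val - a) = r.val by omega, ZMod.natCast_zmod_val]

theorem IsCycleMap.hasKWheel_of_chord [NeZero N] {C : ZMod N → V} (hC : G.IsCycleMap C)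
    {a : ℕ} (ha : 1 ≤ a) (haN : a < N) (hchord : G.Adj (C a) (C (-1))) (hk : 3 ≤ k)
    (hdeg : k < (G.neighborSet (C 0)).ncard) (hnbr : G.neighborSet (C 0) ⊆ range C)
    (hband : ∀ j : ℕ, 2 ≤ j → j < a → ¬ G.Adj (C 0) (C j)) : HasKWheel G k := by
  have : NeZero (N - a) := ⟨by omega⟩
  have hmem := apply_mem_range_shortcut_iff hC.injective haN
  refine (hC.shortcut haN hchord).hasKWheel (u := C 0) (by rw [hmem, ZMod.val_zero]; omega)
    hk ?_
  have hsub : G.neighborSet (C 0) \ {C 1} ⊆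
      {v | v ∈ range (SimpleGraph.shortcut C a) ∧ G.Adj (C 0) v} := by
    rintro v ⟨hv, hv1⟩
    obtain ⟨r, rfl⟩ := hnbr hv
    refine ⟨(hmem r).2 ?_, hv⟩
    by_contra! hra
    rw [← ZMod.natCast_zmod_val r] at hv hv1
    match hr : r.val with
    | 0 => simp [hr] at hv
    | 1 => exact hv1 (by simp [hr])
    | j + 2 => exact hband (j + 2) (by omega) (by omega) (by rwa [hr] at hv)
  calc k ≤ (G.neighborSet (C 0)).ncard - 1 := by omega
    _ ≤ (G.neighborSet (C 0) \ {C 1}).ncard := pred_ncard_le_ncard_sdiff_singleton _ _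
    _ ≤ _ := ncard_le_ncard hsub

def posaRotate (f : ℕ → V) (j : ℕ) : ℕ → V := fun p => if p < j then f (j - 1 - p) else f p

theorem image_posaRotate_Iio (f : ℕ → V) {j : ℕ} (hjm : j ≤ m) :
    posaRotate f j '' Iio m = f '' Iio m := by
  ext v
  constructor
  · rintro ⟨p, hp, rfl⟩
    unfold posaRotate
    split_ifs
    exacts [⟨j - 1 - p, by simp at hp ⊢; omega, rfl⟩, ⟨p, hp, rfl⟩]
  · rintro ⟨p, hp, rfl⟩
    by_cases hpj : p < j
    · exact ⟨j - 1 - p, by simp at hp ⊢; omega, by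
        simp only [posaRotate, if_pos (by omega : j - 1 - p < j)]; congr 1; omega⟩
    · exact ⟨p, hp, if_neg hpj⟩

theorem IsPathMap.posaRotate {f : ℕ → V} (hf : G.IsPathMap n f) {j : ℕ} (hjn : j < n)
    (hadj : G.Adj (f 0) (f j)) : G.IsPathMap n (posaRotate f j) := by
  constructor
  · intro p hp q hq h
    simp only [mem_Iio] at hp hq
    unfold SimpleGraph.posaRotate at h
    split_ifs at h <;> have := hf.injOn (by simp; omega) (by simp; omega) h <;> omega
  · intro p hp
    unfold SimpleGraph.posaRotate
    split_ifs with h1 h2 h2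
    · simpa [show j - 1 - p = j - 1 - (p + 1) + 1 by omega] using (hf.adj _ (by omega)).symm
    · simpa [show j - 1 - p = 0 by omega, show p + 1 = j by omega] using hadj
    · omega
    · exact hf.adj p hp

theorem IsPathMap.exists_eq_of_adj {f : ℕ → V} (hf : G.IsPathMap n f)
    (hmax : ∀ m g, G.IsPathMap m g → m ≤ n) {v : V} (hv : G.Adj (f 0) v) :
    ∃ j < n, f j = v := by
  by_contra! hoff
  have hcons : G.IsPathMap (n + 1) (fun p => if p = 0 then v else f (p - 1)) := by
    constructor
    · intro p hp q hq h
      simp only [mem_Iio] at hp hq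
      dsimp only at h
      split_ifs at h with h1 h2 h2
      · omega
      · exact absurd h.symm (hoff _ (by omega))
      · exact absurd h (hoff _ (by omega))
      · have := hf.injOn (by simp; omega) (by simp; omega) h
        omega
    · intro p hp
      rcases p with _ | p
      · simpa using hv.symm
      · simpa using hf.adj p (by omega)
  exact absurd (hmax _ _ hcons) (by omega)

theorem exists_isPathMap_forall_le [Fintype V] [Nonempty V] (G : SimpleGraph V) :
    ∃ n f, G.IsPathMap n f ∧ ∀ m g, G.IsPathMap m g → m ≤ n := by
  classical
  let IsLength := fun m => ∃ g, G.IsPathMap m g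
  have hbound : ∀ m g, G.IsPathMap m g → m ≤ Fintype.card V := fun m g hg => by
    simpa using Finset.card_le_card_of_injOn g (s := Finset.range m) (t := Finset.univ)
      (fun _ _ => by simp) (by simpa using hg.injOn)
  have h0 : IsLength 0 := ⟨fun _ => Classical.arbitrary V, by simp, by simp⟩
  obtain ⟨f, hf⟩ := Nat.findGreatest_spec (Nat.zero_le _) h0
  exact ⟨_, f, hf, fun m g hg => Nat.le_findGreatest (hbound m g hg) ⟨g, hg⟩⟩

theorem IsPathMap.exists_farthest_adj_head {f : ℕ → V} (hf : G.IsPathMap n f)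
    (hmax : ∀ m g, G.IsPathMap m g → m ≤ n) {v : V} (hv : G.Adj (f 0) v) :
    ∃ P t, G.IsPathMap n P ∧ t < n ∧ G.Adj (P 0) (P t) ∧
      ∀ g j, G.IsPathMap n g → j < n → G.Adj (g 0) (g j) → j ≤ t := by
  classical
  let Reach := fun j => ∃ g, G.IsPathMap n g ∧ j < n ∧ G.Adj (g 0) (g j)
  obtain ⟨j, hj, rfl⟩ := hf.exists_eq_of_adj hmax hv
  obtain ⟨P, hP, ht, hPt⟩ := Nat.findGreatest_spec (P := Reach) hj.le ⟨f, hf, hj, hv⟩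
  exact ⟨P, _, hP, ht, hPt, fun g i hg hi h => Nat.le_findGreatest hi.le ⟨g, hg, hi, h⟩⟩

theorem hasKWheel_of_prefix_chord [NeZero N] {S : Set V} (hk : 3 ≤ k)
    (hdeg : ∀ v, k < (G.neighborSet v).ncard) (hNn : N ≤ n)
    (hclosed : ∀ g, G.IsPathMap n g → g '' Iio N = S → G.neighborSet (g 0) ⊆ S) (a : ℕ) :
    ∀ (C : ZMod N → V) (g : ℕ → V), G.IsCycleMap C → range C = S → G.IsPathMap n g →
      g '' Iio N = S → 1 ≤ a → a < N → (∀ p ≤ a, g p = C p) → G.Adj (C a) (C (-1)) →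
      HasKWheel G k := by
  induction a using Nat.strong_induction_on with
  | _ a ih =>
  intro C g hC hCS hg hgS ha haN hprefix hchord
  have hhead : g 0 = C 0 := by simpa using hprefix 0 (Nat.zero_le _)
  by_cases hband : ∃ j : ℕ, 2 ≤ j ∧ j < a ∧ G.Adj (C 0) (C j)
  · obtain ⟨j, hj2, hja, hadj⟩ := hband
    have hadj' : G.Adj (g 0) (g j) := by rwa [hhead, hprefix j hja.le]
    refine ih (j - 1) (by omega) (fun r => C ((j - 1 : ℕ) - r)) (posaRotate g j)
      (hC.reflect _) (by rw [range_reflect, hCS]) (hg.posaRotate (by omega) hadj')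
      (by rw [image_posaRotate_Iio g (by omega), hgS]) (by omega) (by omega) ?_ ?_
    · intro p hp
      simp only [posaRotate, if_pos (by omega : p < j)]
      rw [hprefix _ (by omega), Nat.cast_sub hp]
    · simpa [Nat.cast_sub (by omega : 1 ≤ j)] using hadj
  · push Not at hband
    exact hC.hasKWheel_of_chord ha haN hchord hk (hdeg _) (hhead ▸ hCS ▸ hclosed g hg hgS) hband

theorem hasKWheel_of_lt_ncard_neighborSet [Fintype V] [Nonempty V] (hk : 3 ≤ k)
    (hdeg : ∀ v, k < (G.neighborSet v).ncard) : HasKWheel G k := by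
  obtain ⟨n, f, hf, hmax⟩ := exists_isPathMap_forall_le G
  obtain ⟨v, hv⟩ := nonempty_of_ncard_ne_zero (by have := hdeg (f 0); omega :
    (G.neighborSet (f 0)).ncard ≠ 0)
  obtain ⟨P, t, hP, htn, hPt, hfarthest⟩ := hf.exists_farthest_adj_head hmax hv
  have hclosed : ∀ g, G.IsPathMap n g → g '' Iio (t + 1) = P '' Iio (t + 1) →
      G.neighborSet (g 0) ⊆ P '' Iio (t + 1) := by
    rintro g hg hgS _ hv
    obtain ⟨j, hj, rfl⟩ := hg.exists_eq_of_adj hmax hv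
    exact hgS ▸ ⟨j, Nat.lt_succ_of_le (hfarthest g j hg hj hv), rfl⟩
  have ht : k < t := by
    have hsub : G.neighborSet (P 0) ⊆ P '' Ioc 0 t := by
      rintro _ hv
      obtain ⟨j, hj, rfl⟩ := hP.exists_eq_of_adj hmax hv
      exact ⟨j, ⟨Nat.pos_of_ne_zero (by rintro rfl; exact hv.ne rfl), hfarthest P j hP hj hv⟩,
        rfl⟩
    calc k < _ := hdeg (P 0)
      _ ≤ (P '' Ioc 0 t).ncard := ncard_le_ncard hsub (toFinite _)
      _ ≤ (Ioc 0 t).ncard := ncard_image_le (finite_Ioc 0 t)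
      _ = t := by simp
  refine hasKWheel_of_prefix_chord hk hdeg htn hclosed (t - 1) _ P
    ((hP.mono htn).isCycleMap (by simpa using hPt.symm)) (range_comp_val P) hP rfl
    (by omega) (by omega) (fun p hp => ?_) ?_
  · simp [ZMod.val_natCast_of_lt (by omega : p < t + 1)]
  · simpa [ZMod.val_neg_one, Nat.mod_eq_of_lt (by omega : t - 1 < t + 1),
      show t - 1 + 1 = t by omega] using hP.adj (t - 1) (by omega)

end SimpleGraph

/-- For any integer `k ≥ 4`, every (nonempty) `k`-wheel-free graph contains a
vertex of degree at most `k`. -/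
theorem wheel_free_exists_low_degree
    {V : Type*} [Fintype V] [Nonempty V] (G : SimpleGraph V)
    (k : ℕ) (hk : 4 ≤ k) (hfree : ¬ HasKWheel G k) :
    ∃ v : V, (G.neighborSet v).ncard ≤ k := by
  by_contra! hdeg
  exact hfree (G.hasKWheel_of_lt_ncard_neighborSet (by omega) hdeg)
end

section
/- Every k-chromatic digraph contains a directed path of length k−1. -/
/-!
Choose a maximal acyclic set `B` of arcs of the digraph and colour each vertex by the length of
the longest `B`-path starting at it. Arcs of `B` strictly decrease this height; any other arc
`u → v` closes a `B`-cycle when added to `B`, so `v` reaches `u` in `B` and the height strictly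
increases along it. Hence the height is a proper colouring, and a vertex of maximal height starts
a path with as many vertices as there are colours.
-/

variable {V : Type*}

open Relation List

namespace Relation

lemma TransGen.of_adjoin_arc {R : V → V → Prop} {u v x y : V}
    (h : TransGen (fun a b => R a b ∨ a = u ∧ b = v) x y) :
    TransGen R x y ∨ ReflTransGen R x u ∧ ReflTransGen R v y := by
  induction h with
  | single hs =>
    rcases hs with h | ⟨rfl, rfl⟩
    · exact .inl (.single h)
    · exact .inr ⟨.refl, .refl⟩
  | tail _ hs ih =>
    rcases hs with h | ⟨rfl, rfl⟩
    · rcases ih with h₁ | ⟨h₁, h₂⟩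
      · exact .inl (h₁.tail h)
      · exact .inr ⟨h₁, h₂.tail h⟩
    · rcases ih with h₁ | ⟨h₁, -⟩
      · exact .inr ⟨h₁.to_reflTransGen, .refl⟩
      · exact .inr ⟨h₁, .refl⟩

end Relation

lemma exists_maximal_acyclic_le [Finite V] (A : V → V → Prop) :
    ∃ B ≤ A, (∀ x, ¬ TransGen B x x) ∧ ∀ u v, A u v → ¬ B u v → ReflTransGen B v u := by
  obtain ⟨B, -, ⟨hBA, hB⟩, hmax⟩ := Finite.exists_le_maximal
    (p := fun B : V → V → Prop => B ≤ A ∧ ∀ x, ¬ TransGen B x x) (a := ⊥)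
    ⟨bot_le, fun x h => by cases h with | single h => exact h | tail _ h => exact h⟩
  refine ⟨B, hBA, hB, fun u v huv hnB => ?_⟩
  let B' : V → V → Prop := fun a b => B a b ∨ a = u ∧ b = v
  have hB'A : B' ≤ A := by
    rintro a b (h | ⟨rfl, rfl⟩)
    exacts [hBA a b h, huv]
  have hcycle : ∃ x, TransGen B' x x := by
    by_contra! hacyc
    exact hnB (hmax ⟨hB'A, hacyc⟩ (fun a b h => .inl h) u v (.inr ⟨rfl, rfl⟩))
  obtain ⟨x, hx⟩ := hcycle
  rcases hx.of_adjoin_arc with h | ⟨hxu, hvx⟩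
  exacts [(hB x h).elim, hvx.trans hxu]

lemma List.IsChain.nodup_of_acyclic {B : V → V → Prop} (hB : ∀ x, ¬ TransGen B x x)
    {l : List V} (hl : l.IsChain B) : l.Nodup :=
  (isChain_iff_pairwise.1 (hl.imp fun _ _ => TransGen.single)).imp
    fun {a b} (hab : TransGen B a b) (heq : a = b) => hB b (heq ▸ hab)

section Height

variable [Fintype V] (B : V → V → Prop)

open Classical in
/-- The number of arcs of a longest `B`-path starting at `v`; the search bound `card V` is only
correct for acyclic `B`, whose paths do not repeat vertices. -/
noncomputable def height (v : V) : ℕ :=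
  Nat.findGreatest (fun n => ∃ l : List V, (v :: l).IsChain B ∧ l.length = n) (Fintype.card V)

variable {B}

lemma exists_isChain_length_height (v : V) :
    ∃ l : List V, (v :: l).IsChain B ∧ l.length = height B v := by
  classical
  exact Nat.findGreatest_spec (P := fun n => ∃ l : List V, (v :: l).IsChain B ∧ l.length = n)
    (Nat.zero_le _) ⟨[], .singleton v, rfl⟩

lemma length_le_height (hB : ∀ x, ¬ TransGen B x x) {v : V} {l : List V}
    (hl : (v :: l).IsChain B) : l.length ≤ height B v := by
  classical
  have hcard : (v :: l).length ≤ Fintype.card V := (hl.nodup_of_acyclic hB).length_le_card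
  unfold height
  exact Nat.le_findGreatest (m := l.length) (Nat.le_of_succ_le hcard) ⟨l, hl, rfl⟩

lemma height_lt_of_rel (hB : ∀ x, ¬ TransGen B x x) {x y : V} (h : B x y) :
    height B y < height B x := by
  obtain ⟨l, hl, hlen⟩ := exists_isChain_length_height (B := B) y
  exact hlen ▸ length_le_height hB (isChain_cons_cons.2 ⟨h, hl⟩)

lemma height_lt_of_transGen (hB : ∀ x, ¬ TransGen B x x) {x y : V} (h : TransGen B x y) :
    height B y < height B x := by
  have := h.lift (p := ((· > ·) : ℕ → ℕ → Prop)) (height B) fun _ _ => height_lt_of_rel hB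
  rwa [transGen_eq_self] at this

end Height

lemma exists_path_colorable_length [Fintype V] (A : V → V → Prop) :
    ∃ p : List V, p.IsChain A ∧ p.Nodup ∧ (underlying A).Colorable p.length := by
  cases isEmpty_or_nonempty V
  · exact ⟨[], .nil, nodup_nil, .of_isEmpty 0⟩
  obtain ⟨B, hBA, hB, hback⟩ := exists_maximal_acyclic_le A
  have height_ne_of_arc {x y : V} (hxy : x ≠ y) (h : A x y) : height B x ≠ height B y := by
    by_cases hxyB : B x y
    · exact (height_lt_of_rel hB hxyB).ne'
    · obtain rfl | hyx := reflTransGen_iff_eq_or_transGen.1 (hback x y h hxyB)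
      exacts [(hxy rfl).elim, (height_lt_of_transGen hB hyx).ne]
  obtain ⟨v, hv⟩ := Finite.exists_max (height B)
  obtain ⟨l, hl, hlen⟩ := exists_isChain_length_height (B := B) v
  refine ⟨v :: l, hl.imp hBA, hl.nodup_of_acyclic hB, ⟨.mk
    (fun w => ⟨height B w, by simpa [hlen, Nat.lt_succ_iff] using hv w⟩) ?_⟩⟩
  rintro x y ⟨hxy, hA | hA⟩ hcol
  · exact height_ne_of_arc hxy hA (Fin.mk.inj_iff.1 hcol)
  · exact height_ne_of_arc hxy.symm hA (Fin.mk.inj_iff.1 hcol).symm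

theorem gallai_roy_general
    {V : Type*} [Fintype V] (A : V → V → Prop)
    (k : ℕ)
    (hchr : (underlying A).chromaticNumber = (k : ℕ∞)) :
    ∃ p : List V, p.Chain' A ∧ p.Nodup ∧ p.length = k := by
  obtain ⟨p, hpath, hnodup, hcol⟩ := exists_path_colorable_length A
  have hk : k ≤ p.length := by exact_mod_cast hchr ▸ hcol.chromaticNumber_le
  exact ⟨p.take k, hpath.take k, hnodup.sublist (take_sublist k p), by simp [hk]⟩

/-- Gallai–Roy: every `k`-chromatic digraph contains a directed path of
length `k − 1` (i.e. on `k` vertices). -/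
theorem gallai_roy
    {V : Type*} [Fintype V] (A : V → V → Prop) (hirr : ∀ v : V, ¬ A v v)
    (k : ℕ) (hk : 0 < k)
    (hchr : (underlying A).chromaticNumber = (k : ℕ∞)) :
    ∃ p : List V, p.Chain' A ∧ p.Nodup ∧ p.length = k :=
  gallai_roy_general A k hchr
end

section
/- For any positive integers b and c, there exists an acyclic digraph D with χ(D) ≥ c in which every oriented cycle has more than b blocks. -/
variable {V : Type*}

/-- A digraph is acyclic if it contains no directed cycle. -/
def Acyclic (A : V → V → Prop) : Prop :=
  ¬ ∃ (x : V) (l : List V), (x :: l).Nodup ∧ List.Chain A x (l ++ [x])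

/-!
By Erdős's probabilistic argument there is a graph with no cycle of length at most `b (c + 1)`
that is not `c`-colorable: with suitable edge probability a random graph has fewer than `n / 2`
short cycles and no independent set of size `n / (2c)`, so deleting one vertex from each short
cycle leaves a graph of the required kind. An edge-minimal such subgraph `H` is
`(c + 1)`-colorable; orienting each edge of `H` towards the larger color gives an acyclic digraph
with underlying graph `H`. The color is strictly monotone along a block, so a block has at most
`c + 1` vertices, while an oriented cycle has more than `b (c + 1)` vertices: it has more than
`b` blocks.
-/

open Finset

lemma card_filter_forall_mem_mul_pow {ι β : Type*} [Fintype ι] [DecidableEq ι] [Fintype β]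
    [DecidableEq β] (S : Finset ι) (B : Finset β) :
    #{ω : ι → β | ∀ e ∈ S, ω e ∈ B} * Fintype.card β ^ #S
      = #B ^ #S * Fintype.card β ^ Fintype.card ι := by
  have hpi : ({ω : ι → β | ∀ e ∈ S, ω e ∈ B} : Finset _)
      = Fintype.piFinset fun e => if e ∈ S then B else univ := by
    ext ω
    simp only [mem_filter, mem_univ, true_and, Fintype.mem_piFinset]
    exact ⟨fun h e => by split_ifs with he; exacts [h e he, mem_univ _],
      fun h e he => by simpa [he] using h e⟩
  simp only [hpi, Fintype.card_piFinset, apply_ite card, card_univ]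
  rw [prod_ite, prod_const, prod_const, filter_mem_eq_inter,
    univ_inter, filter_not, filter_mem_eq_inter, univ_inter, card_univ_sdiff,
    mul_assoc, pow_sub_mul_pow _ (card_le_univ S)]

lemma two_pow_mul_sub_one_pow_le {s : ℕ} (hs : 0 < s) (t : ℕ) :
    2 ^ t * (s - 1) ^ (s * t) ≤ s ^ (s * t) := by
  obtain ⟨a, rfl⟩ : ∃ a, s = a + 1 := ⟨s - 1, by omega⟩
  -- Bernoulli: `(1 + 1/a)^(a+1) ≥ 2`
  have hbern : a ^ (a + 1) + (a + 1) * a ^ a * 1 ≤ (a + 1) ^ (a + 1) := by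
    simpa using pow_add_mul_le_add_pow (Nat.zero_le a) (by omega : 0 ≤ 2 * a + 1) (a + 1)
  have hbase : 2 * a ^ (a + 1) ≤ (a + 1) ^ (a + 1) := by
    have : a ^ (a + 1) ≤ (a + 1) * a ^ a := by rw [pow_succ, mul_comm]; gcongr; omega
    omega
  simpa [pow_mul, mul_pow] using Nat.pow_le_pow_left hbase t

lemma two_mul_two_pow_pow_mul_sub_one_pow_choose_lt {s L r : ℕ} (hs : 2 ≤ s)
    (hr : r = 2 * (s * (L + 1)) + 1) :
    2 * (2 ^ L) ^ r * (s - 1) ^ r.choose 2 < s ^ r.choose 2 := by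
  have hQ : r.choose 2 = s * (r * (L + 1)) := by
    rw [Nat.choose_two_right, show r - 1 = 2 * (s * (L + 1)) by omega,
      Nat.mul_left_comm, Nat.mul_div_cancel_left _ two_pos]
    ring
  have hpow : 2 * (2 ^ L) ^ r < 2 ^ (r * (L + 1)) := by
    have hsL : 0 < s * (L + 1) := Nat.mul_pos (by omega) L.succ_pos
    have : 2 < 2 ^ r := (show 2 < r by omega).trans Nat.lt_two_pow_self
    rw [← pow_mul, show r * (L + 1) = L * r + r by ring, pow_add, mul_comm 2]
    exact Nat.mul_lt_mul_of_pos_left this (by positivity)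
  calc 2 * (2 ^ L) ^ r * (s - 1) ^ r.choose 2 < 2 ^ (r * (L + 1)) * (s - 1) ^ r.choose 2 :=
        Nat.mul_lt_mul_of_pos_right hpow (pow_pos (by omega) _)
    _ ≤ s ^ r.choose 2 := by rw [hQ]; exact two_pow_mul_sub_one_pow_le (by omega) _

lemma exists_mul_lt_two_pow (A : ℕ) : ∃ u, 0 < u ∧ A * u < 2 ^ u := by
  have hA := Nat.lt_two_pow_self (n := A)
  refine ⟨2 ^ (A + 1), by positivity, ?_⟩
  calc A * 2 ^ (A + 1) < 2 ^ A * 2 ^ (A + 1) := by gcongr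
    _ = 2 ^ (2 * A + 1) := by rw [← pow_add]; ring_nf
    _ < 2 ^ 2 ^ (A + 1) := Nat.pow_lt_pow_right (by norm_num) (by rw [pow_succ]; omega)

lemma acyclic_of_strictMono {α : Type*} [Preorder α] {A : V → V → Prop} (φ : V → α)
    (hφ : ∀ x y, A x y → φ x < φ y) : Acyclic A := by
  rintro ⟨x, l, -, hchain⟩
  have hlt : List.IsChain (fun a b => φ a < φ b) (x :: (l ++ [x])) := List.IsChain.imp hφ hchain
  rw [List.isChain_iff_pairwise] at hlt
  exact lt_irrefl _ (List.rel_of_pairwise_cons hlt (by simp))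

section SignChanges

variable {m : ℕ} {σ : ZMod m → Bool} {ν : ZMod m → ℕ}

lemma sign_eq_and_le_of_no_sign_change
    (hstep : ∀ i, σ i = true ∧ ν i < ν (i + 1) ∨ σ i = false ∧ ν (i + 1) < ν i)
    (i : ZMod m) (t : ℕ) (hrun : ∀ j < t, σ (i + j) = σ (i + j + 1)) :
    σ (i + t) = σ i ∧ (σ i = true → ν i + t ≤ ν (i + t)) ∧
      (σ i = false → ν (i + t) + t ≤ ν i) := by
  induction t with
  | zero => simp
  | succ t ih =>
    obtain ⟨hσ, hup, hdown⟩ := ih fun j hj => hrun j (by omega)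
    have hcast : i + ((t + 1 : ℕ) : ZMod m) = i + t + 1 := by push_cast; ring
    rw [hcast, ← hrun t (by omega), hσ]
    refine ⟨rfl, fun h => ?_, fun h => ?_⟩ <;> rcases hstep (i + t) with ⟨h', hlt⟩ | ⟨h', hlt⟩
    · have := hup h; omega
    · simp [hσ, h] at h'
    · simp [hσ, h] at h'
    · have := hdown h; omega

lemma exists_sign_change [NeZero m]
    (hstep : ∀ i, σ i = true ∧ ν i < ν (i + 1) ∨ σ i = false ∧ ν (i + 1) < ν i) :
    ∃ i, σ i ≠ σ (i + 1) := by
  by_contra! hconst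
  -- a full turn around the cycle returns to the start, yet `ν` moves monotonically
  obtain ⟨-, hup, hdown⟩ := sign_eq_and_le_of_no_sign_change hstep 0 m fun j _ => hconst _
  have hm : 0 < m := Nat.pos_of_neZero m
  rw [ZMod.natCast_self, zero_add] at hup hdown
  cases h : σ 0
  · have := hdown h; omega
  · have := hup h; omega

theorem le_mul_ncard_sign_changes [NeZero m] {c : ℕ} (hν : ∀ i, ν i < c)
    (hstep : ∀ i, σ i = true ∧ ν i < ν (i + 1) ∨ σ i = false ∧ ν (i + 1) < ν i) :
    m ≤ c * {i | σ i ≠ σ (i + 1)}.ncard := by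
  classical
  obtain ⟨j, hj⟩ := exists_sign_change hstep
  have hex : ∀ i : ZMod m, ∃ t : ℕ, σ (i + t) ≠ σ (i + t + 1) := fun i =>
    ⟨(j - i).val, by rwa [ZMod.natCast_zmod_val, add_sub_cancel]⟩
  -- `i ↦ (end of the block of i, ν i)` is injective, as `ν` is strictly monotone on a block
  let d i := Nat.find (hex i)
  have hinj : ∀ i i', d i' ≤ d i → i + d i = i' + d i' → ν i = ν i' → i = i' := by
    intro i i' hle hend hval
    have hi' : i + (d i - d i' : ℕ) = i' := by
      rw [← add_right_cancel_iff (a := ((d i' : ℕ) : ZMod m)), add_assoc, ← Nat.cast_add,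
        Nat.sub_add_cancel hle, hend]
    obtain ⟨-, hup, hdown⟩ := sign_eq_and_le_of_no_sign_change hstep i (d i - d i') fun t ht =>
      not_not.mp (Nat.find_min (hex i) (ht.trans_le (Nat.sub_le _ _)))
    rw [hi', hval] at hup hdown
    have hd : d i - d i' = 0 := by cases h : σ i <;> simp_all
    rw [← hi', hd, Nat.cast_zero, add_zero]
  have hcard := card_le_card_of_injOn (s := univ)
    (t := ({i | σ i ≠ σ (i + 1)} : Finset _) ×ˢ range c) (fun i => (i + d i, ν i))
    (fun i _ => by simpa using ⟨Nat.find_spec (hex i), hν i⟩)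
    (fun i _ i' _ h => by
      simp only [Prod.mk.injEq] at h
      rcases le_total (d i') (d i) with hle | hle
      · exact hinj i i' hle h.1 h.2
      · exact (hinj i' i hle h.1.symm h.2.symm).symm)
  rw [card_univ, ZMod.card, card_product, card_range] at hcard
  rw [Set.ncard_eq_toFinset_card', Set.toFinset_ofPred, mul_comm]
  exact hcard

end SignChanges

namespace SimpleGraph

def IsCycleMap_s14 (G : SimpleGraph V) {m : ℕ} (f : ZMod m → V) : Prop :=
  Function.Injective f ∧ ∀ i, G.Adj (f i) (f (i + 1))

/-- Girth greater than `g`. The bound `3 ≤ m` is needed: an edge traversed back and forth is an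
`IsCycleMap` with `m = 2`. -/
def ShortCycleFree (G : SimpleGraph V) (g : ℕ) : Prop :=
  ∀ ⦃m : ℕ⦄ (f : ZMod m → V), 3 ≤ m → m ≤ g → ¬ G.IsCycleMap_s14 f

variable {G H : SimpleGraph V}

lemma IsCycleMap_s14.mono (hGH : G ≤ H) {m : ℕ} {f : ZMod m → V} (hf : G.IsCycleMap_s14 f) :
    H.IsCycleMap_s14 f :=
  ⟨hf.1, fun i => hGH (hf.2 i)⟩

lemma ShortCycleFree.anti (hGH : G ≤ H) {g : ℕ} (hH : H.ShortCycleFree g) :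
    G.ShortCycleFree g :=
  fun _ f hm hmg hf => hH f hm hmg (hf.mono hGH)

lemma injective_cycle_edges {m : ℕ} (hm : 3 ≤ m) {f : ZMod m → V} (hf : Function.Injective f) :
    Function.Injective fun i => s(f i, f (i + 1)) := by
  intro i j hij
  rcases Sym2.eq_iff.mp hij with ⟨h, -⟩ | ⟨h₁, h₂⟩
  · exact hf h
  · -- otherwise `i = j + 1` and `i + 1 = j`, so `2 = 0` in `ZMod m`
    have h2 : ((2 : ℕ) : ZMod m) = 0 := by
      push_cast
      linear_combination hf h₂ - hf h₁
    have := Nat.le_of_dvd two_pos ((ZMod.natCast_eq_zero_iff 2 m).mp h2)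
    omega

namespace Coloring

variable {α : Type*}

def orientation [LT α] (κ : G.Coloring α) (x y : V) : Prop :=
  G.Adj x y ∧ κ x < κ y

lemma orientation_irrefl [Preorder α] (κ : G.Coloring α) (v : V) : ¬ κ.orientation v v :=
  fun h => lt_irrefl _ h.2

lemma acyclic_orientation [Preorder α] (κ : G.Coloring α) : Acyclic κ.orientation :=
  acyclic_of_strictMono κ fun _ _ h => h.2

lemma underlying_orientation [LinearOrder α] (κ : G.Coloring α) :
    underlying κ.orientation = G := by
  ext x y
  constructor
  · rintro ⟨-, h | h⟩
    exacts [h.1, h.1.symm]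
  · intro h
    exact ⟨h.ne, (κ.valid h).lt_or_gt.imp (⟨h, ·⟩) (⟨h.symm, ·⟩)⟩

theorem le_mul_ncard_sign_changes_of_orientation {c m : ℕ} [NeZero m] (κ : G.Coloring (Fin c))
    (f : ZMod m → V) (σ : ZMod m → Bool)
    (harc : ∀ i, (σ i = true ∧ κ.orientation (f i) (f (i + 1))) ∨
      (σ i = false ∧ κ.orientation (f (i + 1)) (f i))) :
    m ≤ c * {i | σ i ≠ σ (i + 1)}.ncard :=
  le_mul_ncard_sign_changes (ν := fun i => κ (f i)) (fun i => (κ (f i)).isLt)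
    fun i => (harc i).imp (And.imp_right And.right) (And.imp_right And.right)

end Coloring

lemma exists_le_not_colorable_colorable_succ [Finite V] {k : ℕ} (hG : ¬ G.Colorable k) :
    ∃ H ≤ G, ¬ H.Colorable k ∧ H.Colorable (k + 1) := by
  classical
  obtain ⟨H, hHG, hH, hmin⟩ := exists_minimal_le_of_wellFoundedLT (¬ ·.Colorable k) G hG
  refine ⟨H, hHG, hH, ?_⟩
  rcases eq_or_ne H ⊥ with rfl | hne
  · exact (colorable_one_iff.mpr rfl).mono (by omega)
  obtain ⟨x, y, hxy⟩ := ne_bot_iff_exists_adj.mp hne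
  -- by minimality, deleting one edge `xy` makes `H` `k`-colorable; then recolor `x` afresh
  obtain ⟨κ⟩ : (H.deleteEdges {s(x, y)}).Colorable k := by
    by_contra h
    simpa using hmin h (deleteEdges_le _) hxy
  refine ⟨Coloring.mk (fun v => if v = x then Fin.last k else (κ v).castSucc) ?_⟩
  intro u v huv
  by_cases hu : u = x <;> by_cases hv : v = x
  · exact absurd (hu.trans hv.symm) huv.ne
  · simpa [hu, hv] using (Fin.castSucc_lt_last (κ v)).ne'
  · simp [hu, hv]
  · have : (H.deleteEdges {s(x, y)}).Adj u v := by
      simp only [deleteEdges_adj, Set.mem_singleton_iff, Sym2.eq_iff]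
      exact ⟨huv, by tauto⟩
    simpa [hu, hv] using κ.valid this

section Finite

open Classical

variable [Fintype V]

/-- Counts each short cycle once per starting vertex and direction. -/
noncomputable def shortCycleCount (G : SimpleGraph V) (g : ℕ) : ℕ :=
  ∑ k ∈ range (g - 2), #{f : ZMod (k + 3) → V | G.IsCycleMap_s14 f}

theorem exists_shortCycleFree_not_colorable_of_forall_not_isIndepSet (G : SimpleGraph V)
    {g k r : ℕ} (hcyc : 2 * G.shortCycleCount g < Fintype.card V)
    (hind : ∀ T : Finset V, #T = r → ¬ G.IsIndepSet T) (hkr : 2 * k * r < Fintype.card V) :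
    ∃ H : SimpleGraph V, H.ShortCycleFree g ∧ ¬ H.Colorable k := by
  -- delete one vertex from each short cycle
  let W : Finset V := (range (g - 2)).biUnion fun j =>
    ({f : ZMod (j + 3) → V | G.IsCycleMap_s14 f} : Finset _).image (· 0)
  have hW : #W ≤ G.shortCycleCount g :=
    card_biUnion_le.trans (sum_le_sum fun _ _ => card_image_le)
  refine ⟨((⊤ : G.Subgraph).deleteVerts W).spanningCoe, ?_, ?_⟩
  · intro m f hm hmg hf
    obtain ⟨j, rfl⟩ : ∃ j, m = j + 3 := ⟨m - 3, by omega⟩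
    have hf0 : f 0 ∈ W := mem_biUnion.mpr ⟨j, mem_range.mpr (by omega),
      mem_image_of_mem _ (by simpa using hf.mono (Subgraph.spanningCoe_le _))⟩
    exact (Subgraph.deleteVerts_adj.mp (hf.2 0)).2.1 hf0
  · rintro ⟨κ⟩
    -- more than `k * r` vertices survive, so `r` of them share a color; they span an edge of `G`
    have hsurv : k * r < #Wᶜ := by
      rw [card_compl]
      have : 2 * k * r = 2 * (k * r) := by ring
      omega
    obtain ⟨a, -, ha⟩ := exists_lt_card_fiber_of_mul_lt_card_of_maps_to (f := κ) (t := univ)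
      (fun v _ => mem_univ _) (by simpa using hsurv)
    obtain ⟨T, hTsub, hT⟩ := exists_subset_card_eq ha.le
    obtain ⟨x, hx, y, hy, hxy, hadj⟩ : ∃ x ∈ T, ∃ y ∈ T, x ≠ y ∧ G.Adj x y := by
      simpa [IsIndepSet, Set.Pairwise] using hind T hT
    have hx' := mem_filter.mp (hTsub hx)
    have hy' := mem_filter.mp (hTsub hy)
    refine κ.valid ?_ (hx'.2.trans hy'.2.symm)
    simpa [Subgraph.deleteVerts_adj, hadj] using ⟨mem_compl.mp hx'.1, mem_compl.mp hy'.1⟩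

section RandomGraph

variable {s : ℕ} [NeZero s]

/-- The sample `ω` draws each pair of vertices uniformly from `Fin s`; the pair is an edge when it
is drawn to `0`, i.e. with probability `1 / s`. Probabilities are stated as counts of samples,
multiplied out: `#E * s ^ j ≤ s ^ card (Sym2 V)` says `P(E) ≤ s ^ (-j)`. -/
def randomGraph (ω : Sym2 V → Fin s) : SimpleGraph V :=
  fromEdgeSet {e | ω e = 0}

lemma card_filter_isCycleMap_randomGraph_mul_le {k : ℕ} (f : ZMod (k + 3) → V) :
    #{ω : Sym2 V → Fin s | (randomGraph ω).IsCycleMap_s14 f} * s ^ (k + 3)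
      ≤ s ^ Fintype.card (Sym2 V) := by
  by_cases hf : Function.Injective f
  swap
  · simp [IsCycleMap_s14, hf]
  let S := univ.image fun i => s(f i, f (i + 1))
  have hS : #S = k + 3 := by
    rw [card_image_of_injective _ (injective_cycle_edges (by omega) hf), card_univ, ZMod.card]
  have hsub : ({ω | (randomGraph ω).IsCycleMap_s14 f} : Finset (Sym2 V → Fin s))
      ⊆ ({ω | ∀ e ∈ S, ω e ∈ ({0} : Finset (Fin s))} : Finset (Sym2 V → Fin s)) := by
    intro ω hω
    simp only [mem_filter, mem_univ, true_and, IsCycleMap_s14, randomGraph, fromEdgeSet_adj] at hω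
    simpa [S] using fun i => (hω.2 i).1
  calc _ ≤ #{ω : Sym2 V → Fin s | ∀ e ∈ S, ω e ∈ ({0} : Finset (Fin s))} * s ^ #S := by
        rw [hS]; gcongr
    _ = s ^ Fintype.card (Sym2 V) := by
        simpa using card_filter_forall_mem_mul_pow S ({0} : Finset (Fin s))

lemma sum_card_isCycleMap_randomGraph_mul_le (k : ℕ) :
    (∑ ω : Sym2 V → Fin s, #{f : ZMod (k + 3) → V | (randomGraph ω).IsCycleMap_s14 f}) * s ^ (k + 3)
      ≤ Fintype.card V ^ (k + 3) * s ^ Fintype.card (Sym2 V) := by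
  simp_rw [card_filter]
  rw [sum_comm, sum_mul]
  simp_rw [← card_filter]
  calc _ ≤ ∑ _f : ZMod (k + 3) → V, s ^ Fintype.card (Sym2 V) :=
        sum_le_sum fun f _ => card_filter_isCycleMap_randomGraph_mul_le f
    _ = _ := by simp

lemma sum_shortCycleCount_randomGraph_mul_le {g : ℕ} (hs : s ≤ Fintype.card V) :
    (∑ ω : Sym2 V → Fin s, (randomGraph ω).shortCycleCount g) * s ^ g
      ≤ g * Fintype.card V ^ g * s ^ Fintype.card (Sym2 V) := by
  set n := Fintype.card V
  set M := Fintype.card (Sym2 V)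
  unfold shortCycleCount
  rw [sum_comm, sum_mul]
  calc _ ≤ ∑ _k ∈ range (g - 2), n ^ g * s ^ M := by
        refine sum_le_sum fun k hk => ?_
        have hkg : k + 3 ≤ g := by rw [mem_range] at hk; omega
        calc _ = (∑ ω : Sym2 V → Fin s, #{f : ZMod (k + 3) → V | (randomGraph ω).IsCycleMap_s14 f})
                * s ^ (k + 3) * s ^ (g - (k + 3)) := by
              rw [mul_assoc, ← pow_add, Nat.add_sub_cancel' hkg]
          _ ≤ n ^ (k + 3) * s ^ M * n ^ (g - (k + 3)) :=
              Nat.mul_le_mul (sum_card_isCycleMap_randomGraph_mul_le k) (Nat.pow_le_pow_left hs _)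
          _ = n ^ g * s ^ M := by rw [mul_right_comm, ← pow_add, Nat.add_sub_cancel' hkg]
    _ ≤ g * n ^ g * s ^ M := by
        rw [sum_const, card_range, smul_eq_mul, ← mul_assoc]
        gcongr
        omega

lemma two_mul_card_filter_le_two_mul_shortCycleCount_lt {g : ℕ} (hs : s ≤ Fintype.card V)
    (hg : 4 * g * Fintype.card V ^ g < Fintype.card V * s ^ g) :
    2 * #{ω : Sym2 V → Fin s | Fintype.card V ≤ 2 * (randomGraph ω).shortCycleCount g}
      < s ^ Fintype.card (Sym2 V) := by
  set n := Fintype.card V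
  set M := Fintype.card (Sym2 V)
  set bad := ({ω | n ≤ 2 * (randomGraph ω).shortCycleCount g} : Finset (Sym2 V → Fin s))
  -- Markov's inequality
  have hmarkov : #bad * n ≤ 2 * ∑ ω : Sym2 V → Fin s, (randomGraph ω).shortCycleCount g := by
    rw [mul_sum]
    calc #bad * n ≤ ∑ ω ∈ bad, 2 * (randomGraph ω).shortCycleCount g :=
          card_nsmul_le_sum _ _ _ fun ω hω => (mem_filter.mp hω).2
      _ ≤ _ := sum_le_sum_of_subset (subset_univ _)
  refine Nat.lt_of_mul_lt_mul_right (a := n * s ^ g) ?_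
  calc 2 * #bad * (n * s ^ g)
      = 2 * (#bad * n) * s ^ g := by ring
    _ ≤ 2 * (2 * ∑ ω : Sym2 V → Fin s, (randomGraph ω).shortCycleCount g) * s ^ g := by
        gcongr
    _ = 4 * ((∑ ω : Sym2 V → Fin s, (randomGraph ω).shortCycleCount g) * s ^ g) := by ring
    _ ≤ 4 * (g * n ^ g * s ^ M) :=
        Nat.mul_le_mul_left 4 (sum_shortCycleCount_randomGraph_mul_le hs)
    _ = 4 * g * n ^ g * s ^ M := by ring
    _ < n * s ^ g * s ^ M := Nat.mul_lt_mul_of_pos_right hg (pow_pos (Nat.pos_of_neZero s) _)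
    _ = s ^ M * (n * s ^ g) := by ring

lemma card_filter_isIndepSet_randomGraph_mul {T : Finset V} {r : ℕ} (hT : #T = r) :
    #{ω : Sym2 V → Fin s | (randomGraph ω).IsIndepSet T} * s ^ r.choose 2
      = (s - 1) ^ r.choose 2 * s ^ Fintype.card (Sym2 V) := by
  let S := T.offDiag.image Sym2.mk.uncurry
  have hS : #S = r.choose 2 := by rw [Sym2.card_image_offDiag, hT]
  have hfilter : ({ω | (randomGraph ω).IsIndepSet T} : Finset (Sym2 V → Fin s))
      = ({ω | ∀ e ∈ S, ω e ∈ univ.erase 0} : Finset (Sym2 V → Fin s)) := by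
    ext ω
    simp only [S, mem_filter, mem_univ, true_and, forall_mem_image, mem_offDiag, Prod.forall,
      Function.uncurry_apply_pair, mem_erase, and_true, IsIndepSet, Set.Pairwise, mem_coe,
      randomGraph, fromEdgeSet_adj, Set.mem_ofPred_eq]
    grind
  have := card_filter_forall_mem_mul_pow S (univ.erase (0 : Fin s))
  rw [card_erase_of_mem (mem_univ _), card_univ, Fintype.card_fin] at this
  rw [hfilter, ← hS, this]

lemma two_mul_card_filter_exists_isIndepSet_lt {r : ℕ}
    (hr : 2 * Fintype.card V ^ r * (s - 1) ^ r.choose 2 < s ^ r.choose 2) :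
    2 * #{ω : Sym2 V → Fin s | ∃ T : Finset V, #T = r ∧ (randomGraph ω).IsIndepSet T}
      < s ^ Fintype.card (Sym2 V) := by
  set n := Fintype.card V
  set M := Fintype.card (Sym2 V)
  set Q := r.choose 2
  set bad := ({ω | ∃ T : Finset V, #T = r ∧ (randomGraph ω).IsIndepSet T} :
    Finset (Sym2 V → Fin s))
  have hunion : bad ⊆ (powersetCard r (univ : Finset V)).biUnion
      fun T : Finset V => {ω | (randomGraph ω).IsIndepSet (T : Set V)} := by
    intro ω hω
    obtain ⟨T, hT, hind⟩ := (mem_filter.mp hω).2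
    exact mem_biUnion.mpr
      ⟨T, mem_powersetCard.mpr ⟨subset_univ _, hT⟩, mem_filter.mpr ⟨mem_univ _, hind⟩⟩
  have hcount : #bad * s ^ Q ≤ n ^ r * ((s - 1) ^ Q * s ^ M) :=
    calc #bad * s ^ Q
        ≤ (∑ T ∈ powersetCard r (univ : Finset V),
            #{ω : Sym2 V → Fin s | (randomGraph ω).IsIndepSet (T : Set V)})
          * s ^ Q := by gcongr; exact (card_le_card hunion).trans card_biUnion_le
      _ = ∑ _T ∈ powersetCard r (univ : Finset V), (s - 1) ^ Q * s ^ M := by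
        rw [sum_mul]
        exact sum_congr rfl fun T hT =>
          card_filter_isIndepSet_randomGraph_mul (mem_powersetCard.mp hT).2
      _ = n.choose r * ((s - 1) ^ Q * s ^ M) := by
        rw [sum_const, card_powersetCard, card_univ, smul_eq_mul]
      _ ≤ n ^ r * ((s - 1) ^ Q * s ^ M) := by gcongr; exact Nat.choose_le_pow n r
  refine Nat.lt_of_mul_lt_mul_right (a := s ^ Q) ?_
  calc 2 * #bad * s ^ Q = 2 * (#bad * s ^ Q) := mul_assoc _ _ _
    _ ≤ 2 * (n ^ r * ((s - 1) ^ Q * s ^ M)) := Nat.mul_le_mul_left 2 hcount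
    _ = 2 * n ^ r * (s - 1) ^ Q * s ^ M := by ring
    _ < s ^ Q * s ^ M := Nat.mul_lt_mul_of_pos_right hr (pow_pos (Nat.pos_of_neZero s) _)
    _ = s ^ M * s ^ Q := mul_comm _ _

theorem exists_shortCycleFree_not_colorable_of_card {g k r : ℕ} (hs : s ≤ Fintype.card V)
    (hg : 4 * g * Fintype.card V ^ g < Fintype.card V * s ^ g)
    (hr : 2 * Fintype.card V ^ r * (s - 1) ^ r.choose 2 < s ^ r.choose 2)
    (hkr : 2 * k * r < Fintype.card V) :
    ∃ H : SimpleGraph V, H.ShortCycleFree g ∧ ¬ H.Colorable k := by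
  let bad₁ : Finset (Sym2 V → Fin s) :=
    {ω | Fintype.card V ≤ 2 * (randomGraph ω).shortCycleCount g}
  let bad₂ : Finset (Sym2 V → Fin s) :=
    {ω | ∃ T : Finset V, #T = r ∧ (randomGraph ω).IsIndepSet T}
  have h₁ : 2 * #bad₁ < s ^ Fintype.card (Sym2 V) :=
    two_mul_card_filter_le_two_mul_shortCycleCount_lt hs hg
  have h₂ : 2 * #bad₂ < s ^ Fintype.card (Sym2 V) := two_mul_card_filter_exists_isIndepSet_lt hr
  obtain ⟨ω, -, hω⟩ := exists_mem_notMem_of_card_lt_card (s := bad₁ ∪ bad₂) (t := univ) (by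
    have := card_union_le bad₁ bad₂
    rw [card_univ, Fintype.card_fun, Fintype.card_fin]
    omega)
  simp only [bad₁, bad₂, mem_union, mem_filter, mem_univ, true_and, not_or, not_le, not_exists,
    not_and] at hω
  exact (randomGraph ω).exists_shortCycleFree_not_colorable_of_forall_not_isIndepSet hω.1
    hω.2 hkr

end RandomGraph

end Finite

theorem exists_shortCycleFree_not_colorable (g k : ℕ) :
    ∃ n, ∃ G : SimpleGraph (Fin n), G.ShortCycleFree g ∧ ¬ G.Colorable k := by
  obtain ⟨u, hu, hA⟩ := exists_mul_lt_two_pow ((2 * k + 1) * (4 * g + 7))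
  -- `n = 2^L` vertices, edge probability `1/s = n^(-(2g+1)/(2g+2))`, independent sets of
  -- size `r ≈ 2 s log₂ n`
  obtain ⟨x, hx⟩ : ∃ x, x = 2 ^ u := ⟨_, rfl⟩
  obtain ⟨s, hs⟩ : ∃ s, s = x ^ (2 * g + 1) := ⟨_, rfl⟩
  obtain ⟨L, hL⟩ : ∃ L, L = (2 * g + 2) * u := ⟨_, rfl⟩
  obtain ⟨r, hr⟩ : ∃ r, r = 2 * (s * (L + 1)) + 1 := ⟨_, rfl⟩
  rw [← hx] at hA
  have hx2 : 2 ≤ x := hx ▸ Nat.le_self_pow hu.ne' 2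
  have hxs : x ≤ s := hs ▸ Nat.le_self_pow (by omega) x
  have hAx : 2 * k * (2 * L + 3) < x := by
    refine lt_of_le_of_lt ?_ hA
    rw [hL]
    nlinarith
  have hn : s * x = 2 ^ L := by rw [hs, hL, hx, ← pow_succ, ← pow_mul]; ring_nf
  have : NeZero s := ⟨by omega⟩
  refine ⟨s * x, exists_shortCycleFree_not_colorable_of_card (s := s) (r := r) ?_ ?_ ?_ ?_⟩ <;>
    rw [Fintype.card_fin]
  · exact Nat.le_mul_of_pos_right s (by omega)
  · have hgx : 4 * g < x := lt_of_le_of_lt (by nlinarith) hA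
    calc 4 * g * (s * x) ^ g = 4 * g * (x ^ g * s ^ g) := by ring
      _ < x * (x ^ g * s ^ g) :=
        Nat.mul_lt_mul_of_pos_right hgx (Nat.mul_pos (pow_pos (by omega) _) (pow_pos (by omega) _))
      _ ≤ x * (s * s ^ g) := by
          gcongr
          rw [hs]
          exact Nat.pow_le_pow_right (by omega) (by omega)
      _ = s * x * s ^ g := by ring
  · rw [hn]
    exact two_mul_two_pow_pow_mul_sub_one_pow_choose_lt (by omega) hr
  · calc 2 * k * r = 2 * k * (2 * (s * (L + 1))) + 2 * k := by rw [hr]; ring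
      _ ≤ 2 * k * (2 * (s * (L + 1))) + 2 * k * s :=
          Nat.add_le_add_left (Nat.le_mul_of_pos_right _ (by omega)) _
      _ = s * (2 * k * (2 * L + 3)) := by ring
      _ < s * x := Nat.mul_lt_mul_of_pos_left hAx (by omega)

end SimpleGraph

theorem exists_acyclic_large_chromatic_many_blocks_general
    (b c : ℕ) :
    ∃ (n : ℕ) (A : Fin n → Fin n → Prop),
      (∀ v, ¬ A v v) ∧ Acyclic A ∧
      ((c : ℕ∞) ≤ (underlying A).chromaticNumber) ∧
      ∀ (m : ℕ) (f : ZMod m → Fin n) (σ : ZMod m → Bool),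
        3 ≤ m → Function.Injective f →
        (∀ i : ZMod m, (σ i = true ∧ A (f i) (f (i + 1))) ∨
                        (σ i = false ∧ A (f (i + 1)) (f i))) →
        b < {i : ZMod m | σ i ≠ σ (i + 1)}.ncard := by
  obtain ⟨n, G, hG, hGcol⟩ := SimpleGraph.exists_shortCycleFree_not_colorable (b * (c + 1)) c
  obtain ⟨H, hHG, hHcol, ⟨κ⟩⟩ := SimpleGraph.exists_le_not_colorable_colorable_succ hGcol
  refine ⟨n, κ.orientation, κ.orientation_irrefl, κ.acyclic_orientation, ?_, ?_⟩
  · rw [κ.underlying_orientation, SimpleGraph.le_chromaticNumber_iff_colorable]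
    intro m hm
    have : c < m := by
      by_contra! h
      exact hHcol (hm.mono h)
    exact_mod_cast this.le
  · intro m f σ hm hf harc
    have : NeZero m := ⟨by omega⟩
    have hlong : b * (c + 1) < m := by
      by_contra! h
      exact hG.anti hHG f hm h ⟨hf, fun i => (harc i).elim (·.2.1) (·.2.1.symm)⟩
    have hblocks := κ.le_mul_ncard_sign_changes_of_orientation f σ harc
    exact Nat.lt_of_mul_lt_mul_left (a := c + 1) (by linarith)

/-- For any positive integers `b, c`, there exists an acyclic digraph `D` with
`χ(D) ≥ c` in which every oriented cycle has more than `b` blocks (the number of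
blocks of a non-directed oriented cycle equals the number of changes of
orientation around the cycle). -/
theorem exists_acyclic_large_chromatic_many_blocks
    (b c : ℕ) (hb : 0 < b) (hc : 0 < c) :
    ∃ (n : ℕ) (A : Fin n → Fin n → Prop),
      (∀ v, ¬ A v v) ∧ Acyclic A ∧
      ((c : ℕ∞) ≤ (underlying A).chromaticNumber) ∧
      ∀ (m : ℕ) (f : ZMod m → Fin n) (σ : ZMod m → Bool),
        3 ≤ m → Function.Injective f →
        (∀ i : ZMod m, (σ i = true ∧ A (f i) (f (i + 1))) ∨
                        (σ i = false ∧ A (f (i + 1)) (f i))) →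
        b < {i : ZMod m | σ i ≠ σ (i + 1)}.ncard :=
  exists_acyclic_large_chromatic_many_blocks_general b c
end
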